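/- arXiv:2306.00562 — 7 statements merged into one kernel-verified Lean document; each statement's English description precedes it below -/
import Mathlib

section
/- For every real μ > 0 and all α, β ∈ ℝ, set ω = √(1 + μ²(α² + β²)), α̃ = −μ²β/ω and β̃ = μ²α/ω. Then: (i) α̃² + β̃² < μ²; (ii) with ω̃ = √(1 − (α̃² + β̃²)/μ²) one has ω·ω̃ = 1; (iii) the inverse twin relations α = β̃/(μ²ω̃) and β = −α̃/(μ²ω̃) hold; and (iv) the angle functions ν = μ/ω and ν̃ = −1/(μω̃) satisfy ν̃ = −1/ν. -/
/-! With `s = α² + β²` and `ω² = 1 + μ²s`, the twin vector has squared length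
`μ⁴s/ω² = μ²(1 - ω⁻²)`, which is below `μ²` and gives `ω̃ = √(ω⁻²) = ω⁻¹`.
Every remaining identity is then `ω̃ = ω⁻¹` substituted into the twin relations. -/

namespace ConformalDuality

variable {μ α β ω : ℝ}

lemma twin_sq_add_sq_eq (hω : ω ^ 2 = 1 + μ ^ 2 * (α ^ 2 + β ^ 2)) :
    (-(μ ^ 2 * β) / ω) ^ 2 + (μ ^ 2 * α / ω) ^ 2 = μ ^ 2 * (1 - ω⁻¹ ^ 2) := by
  have hω0 : ω ≠ 0 := (pow_ne_zero_iff two_ne_zero).1 (hω ▸ by positivity)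
  field_simp
  linear_combination -μ ^ 2 * hω

lemma mul_one_sub_inv_sq_lt (hμ : μ ≠ 0) (hω : ω ≠ 0) : μ ^ 2 * (1 - ω⁻¹ ^ 2) < μ ^ 2 := by
  have : 0 < μ ^ 2 * ω⁻¹ ^ 2 := by positivity
  linarith

lemma sqrt_one_sub_twin_div_sq (hμ : μ ≠ 0) (hω : 0 < ω) :
    √(1 - μ ^ 2 * (1 - ω⁻¹ ^ 2) / μ ^ 2) = ω⁻¹ := by
  rw [mul_div_cancel_left₀ _ (pow_ne_zero 2 hμ), sub_sub_cancel,
    Real.sqrt_sq (inv_nonneg.2 hω.le)]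

end ConformalDuality

open ConformalDuality in
/-- Pointwise twin relations of the conformal duality: spacelike condition, `ω·ω̃ = 1`,
the inverse twin relations, and the relation `ν̃ = -1/ν` between the angle functions. -/
theorem twin_relations (μ α β : ℝ) (hμ : 0 < μ)
    (ω αT βT ωT ν νT : ℝ)
    (hω : ω = Real.sqrt (1 + μ ^ 2 * (α ^ 2 + β ^ 2)))
    (hαT : αT = -(μ ^ 2 * β) / ω)
    (hβT : βT = μ ^ 2 * α / ω)
    (hωT : ωT = Real.sqrt (1 - (αT ^ 2 + βT ^ 2) / μ ^ 2))
    (hν : ν = μ / ω)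
    (hνT : νT = -(1 / (μ * ωT))) :
    αT ^ 2 + βT ^ 2 < μ ^ 2 ∧
    ω * ωT = 1 ∧
    α = βT / (μ ^ 2 * ωT) ∧
    β = -αT / (μ ^ 2 * ωT) ∧
    νT = -(1 / ν) := by
  have hω0 : 0 < ω := hω ▸ Real.sqrt_pos.2 (by positivity)
  have hωsq : ω ^ 2 = 1 + μ ^ 2 * (α ^ 2 + β ^ 2) := hω ▸ Real.sq_sqrt (by positivity)
  have hsum : αT ^ 2 + βT ^ 2 = μ ^ 2 * (1 - ω⁻¹ ^ 2) :=
    hαT ▸ hβT ▸ twin_sq_add_sq_eq hωsq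
  have hωT' : ωT = ω⁻¹ := by rw [hωT, hsum, sqrt_one_sub_twin_div_sq hμ.ne' hω0]
  subst hαT hβT hωT' hν hνT
  refine ⟨hsum ▸ mul_one_sub_inv_sq_lt hμ.ne' hω0.ne', ?_, ?_, ?_, ?_⟩ <;> field_simp
end

section
/- Let μ, λ₁, λ₂ > 0 and α, β ∈ ℝ, and set ω = √(1 + μ²(α² + β²)), α̃ = −μ²β/ω, β̃ = μ²α/ω. Then the coefficients of the first fundamental forms induced on the base by the dual graphs satisfy: λ₁²(1 − α̃²/μ²) = λ₁²(1 + μ²α²)/ω², −λ₁λ₂·α̃β̃/μ² = λ₁λ₂μ²αβ/ω², and λ₂²(1 − β̃²/μ²) = λ₂²(1 + μ²β²)/ω². Consequently, the metric induced by the Lorentzian dual graph equals ω⁻² times the metric induced by the Riemannian graph, i.e. the duality diffeomorphism is conformal with conformal factor ω⁻² = μ⁻²ν², where ν = μ/ω is the angle function of the Riemannian graph. -/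
/-!
Writing `ω = √(1 + μ²(α² + β²))`, the twin relations give `1 − α̃²/μ² = 1 − μ²β²/ω²`, and since
`ω² − μ²β² = 1 + μ²α²` this is `(1 + μ²α²)/ω²`; the other coefficients are the same computation
with `α` and `β` exchanged, or a direct cancellation of `μ²`.
-/

namespace KillingGraph

/-- The paper's `ω`; the angle function of the Riemannian graph is `ν = μ / ω`. -/
noncomputable def omega (μ α β : ℝ) : ℝ := √(1 + μ ^ 2 * (α ^ 2 + β ^ 2))

variable {μ α β : ℝ}

theorem omega_comm : omega μ α β = omega μ β α := by
  rw [omega, omega, add_comm (α ^ 2)]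

theorem omega_pos : 0 < omega μ α β :=
  Real.sqrt_pos.mpr (by positivity)

theorem omega_sq : omega μ α β ^ 2 = 1 + μ ^ 2 * (α ^ 2 + β ^ 2) :=
  Real.sq_sqrt (by positivity)

theorem one_sub_sq_twin_div_sq :
    1 - (μ ^ 2 * β / omega μ α β) ^ 2 / μ ^ 2 = (1 + μ ^ 2 * α ^ 2) / omega μ α β ^ 2 := by
  have hω : omega μ α β ≠ 0 := omega_pos.ne'
  field_simp
  linear_combination (omega_sq : omega μ α β ^ 2 = _)

theorem neg_twin_mul_twin_div_sq :
    -((-(μ ^ 2 * β) / omega μ α β) * (μ ^ 2 * α / omega μ α β) / μ ^ 2) =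
      μ ^ 2 * α * β / omega μ α β ^ 2 := by
  have hω : omega μ α β ≠ 0 := omega_pos.ne'
  field_simp

theorem inv_omega_sq (hμ : μ ≠ 0) :
    (omega μ α β ^ 2)⁻¹ = (μ ^ 2)⁻¹ * (μ / omega μ α β) ^ 2 := by
  have hω : omega μ α β ≠ 0 := omega_pos.ne'
  field_simp

end KillingGraph

open KillingGraph in
theorem duality_conformal_factor_general (μ l₁ l₂ α β : ℝ)
    (hμ : 0 < μ)
    (ω αT βT ν : ℝ)
    (hω : ω = Real.sqrt (1 + μ ^ 2 * (α ^ 2 + β ^ 2)))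
    (hαT : αT = -(μ ^ 2 * β) / ω)
    (hβT : βT = μ ^ 2 * α / ω)
    (hν : ν = μ / ω) :
    l₁ ^ 2 * (1 - αT ^ 2 / μ ^ 2) = l₁ ^ 2 * (1 + μ ^ 2 * α ^ 2) / ω ^ 2 ∧
    -(l₁ * l₂ * (αT * βT) / μ ^ 2) = l₁ * l₂ * μ ^ 2 * α * β / ω ^ 2 ∧
    l₂ ^ 2 * (1 - βT ^ 2 / μ ^ 2) = l₂ ^ 2 * (1 + μ ^ 2 * β ^ 2) / ω ^ 2 ∧
    (ω ^ 2)⁻¹ = (μ ^ 2)⁻¹ * ν ^ 2 := by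
  change ω = omega μ α β at hω
  subst hω hαT hβT hν
  refine ⟨?_, ?_, ?_, inv_omega_sq hμ.ne'⟩
  · rw [neg_div, neg_sq, one_sub_sq_twin_div_sq, mul_div_assoc]
  · rw [mul_div_assoc, ← mul_neg, neg_twin_mul_twin_div_sq]
    ring
  · rw [omega_comm, one_sub_sq_twin_div_sq, mul_div_assoc]

/-- The coefficients of the first fundamental forms induced on the base by dual graphs:
the Lorentzian induced metric equals `ω⁻²` times the Riemannian induced metric, and
`ω⁻² = μ⁻²ν²` where `ν = μ/ω` is the angle function of the Riemannian graph. -/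
theorem duality_conformal_factor (μ l₁ l₂ α β : ℝ)
    (hμ : 0 < μ) (hl₁ : 0 < l₁) (hl₂ : 0 < l₂)
    (ω αT βT ν : ℝ)
    (hω : ω = Real.sqrt (1 + μ ^ 2 * (α ^ 2 + β ^ 2)))
    (hαT : αT = -(μ ^ 2 * β) / ω)
    (hβT : βT = μ ^ 2 * α / ω)
    (hν : ν = μ / ω) :
    l₁ ^ 2 * (1 - αT ^ 2 / μ ^ 2) = l₁ ^ 2 * (1 + μ ^ 2 * α ^ 2) / ω ^ 2 ∧
    -(l₁ * l₂ * (αT * βT) / μ ^ 2) = l₁ * l₂ * μ ^ 2 * α * β / ω ^ 2 ∧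
    l₂ ^ 2 * (1 - βT ^ 2 / μ ^ 2) = l₂ ^ 2 * (1 + μ ^ 2 * β ^ 2) / ω ^ 2 ∧
    (ω ^ 2)⁻¹ = (μ ^ 2)⁻¹ * ν ^ 2 :=
  duality_conformal_factor_general μ l₁ l₂ α β hμ ω αT βT ν hω hαT hβT hν
end

section
/- Let Ω ⊆ ℝ² be open and star-shaped with respect to the origin, let ε ∈ {+1, −1}, and let λ₁, λ₂, μ, τ : Ω → ℝ be smooth with λ₁, λ₂, μ > 0. Define the Calabi potential C(x,y) = 2∫₀¹ s·τ(sx,sy)·λ₁(sx,sy)·λ₂(sx,sy)/μ(sx,sy) ds, and set a = −ε y C/λ₁ and b = ε x C/λ₂. Then a and b are smooth on Ω and satisfy ∂ₓ(λ₂ b) − ∂_y(λ₁ a) = 2ετλ₁λ₂/μ on Ω. -/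
/-!
Write `f = τλ₁λ₂/μ` and `Ψ(p) = ∫₀¹ s f(s p) ds`, so that the Calabi potential is `C = 2Ψ`.
On `Ω` we have `λ₂ b = ε x C` and `λ₁ a = -ε y C`, so the left-hand side of the bundle curvature
equation is `ε div (C · (x, y)) = ε (2C + DC(p) p)`. Substituting `u = s t` gives
`t² Ψ(t p) = ∫₀ᵗ u f(u p) du`, and differentiating at `t = 1` yields the Euler-type identity
`2Ψ + DΨ(p) p = f(p)`. Smoothness of `Ψ` comes from differentiating under the integral sign,
after replacing `f` by a globally smooth function that agrees with it near the segment `[0, p]`.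
-/

/-- Partial derivative in the `x` direction of a function on `ℝ × ℝ`. -/
noncomputable def pdx (f : ℝ × ℝ → ℝ) (p : ℝ × ℝ) : ℝ := fderiv ℝ f p (1, 0)

/-- Partial derivative in the `y` direction of a function on `ℝ × ℝ`. -/
noncomputable def pdy (f : ℝ × ℝ → ℝ) (p : ℝ × ℝ) : ℝ := fderiv ℝ f p (0, 1)

/-- The Calabi potential of the data `(λ₁, λ₂, μ, τ)` on a star-shaped domain. -/
noncomputable def calabiPotential (l₁ l₂ μ τ : ℝ × ℝ → ℝ) (p : ℝ × ℝ) : ℝ :=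
  2 * ∫ s in (0:ℝ)..1, s * τ (s • p) * l₁ (s • p) * l₂ (s • p) / μ (s • p)

open Set Filter Metric Topology
open scoped ContDiff Manifold

section ParametricIntegral

variable {E F : Type*} [NormedAddCommGroup E] [NormedSpace ℝ E] [FiniteDimensional ℝ E]
  [NormedAddCommGroup F] [NormedSpace ℝ F]

theorem hasFDerivAt_intervalIntegral_of_contDiff {H : ℝ × E → F} (hH : ContDiff ℝ 1 H)
    (a b : ℝ) (x₀ : E) :
    HasFDerivAt (fun x => ∫ t in a..b, H (t, x))
      (∫ t in a..b, fderiv ℝ H (t, x₀) ∘L ContinuousLinearMap.inr ℝ ℝ E) x₀ := by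
  set H' : ℝ × E → E →L[ℝ] F := fun q => fderiv ℝ H q ∘L ContinuousLinearMap.inr ℝ ℝ E
  have hH'_cont : Continuous H' := (hH.continuous_fderiv one_ne_zero).clm_comp continuous_const
  have h_diff (t : ℝ) (x : E) : HasFDerivAt (fun y => H (t, y)) (H' (t, x)) x :=
    (hH.differentiable one_ne_zero (t, x)).hasFDerivAt.comp x
      ((hasFDerivAt_const t x).prodMk (hasFDerivAt_id x))
  obtain ⟨C, hC⟩ := (isCompact_uIcc.prod (isCompact_closedBall x₀ 1)).exists_bound_of_continuousOn
    hH'_cont.continuousOn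
  exact intervalIntegral.hasFDerivAt_integral_of_dominated_of_fderiv_le (bound := fun _ => C)
    (ball_mem_nhds x₀ one_pos)
    (Eventually.of_forall fun x => (hH.continuous.comp (by fun_prop)).aestronglyMeasurable)
    ((hH.continuous.comp (by fun_prop)).intervalIntegrable a b)
    ((hH'_cont.comp (by fun_prop)).aestronglyMeasurable)
    (Eventually.of_forall fun t ht x hx =>
      hC (t, x) ⟨uIoc_subset_uIcc ht, ball_subset_closedBall hx⟩)
    intervalIntegrable_const
    (Eventually.of_forall fun t _ x _ => h_diff t x)

theorem fderiv_intervalIntegral_apply_of_contDiff {H : ℝ × E → F} (hH : ContDiff ℝ 1 H)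
    (a b : ℝ) (x v : E) :
    fderiv ℝ (fun x => ∫ t in a..b, H (t, x)) x v = ∫ t in a..b, fderiv ℝ H (t, x) (0, v) := by
  rw [(hasFDerivAt_intervalIntegral_of_contDiff hH a b x).fderiv,
    ContinuousLinearMap.intervalIntegral_apply]
  · rfl
  · exact (((hH.continuous_fderiv one_ne_zero).comp (by fun_prop)).clm_comp
      continuous_const).intervalIntegrable a b

theorem contDiff_intervalIntegral_of_contDiff {n : ℕ∞} {H : ℝ × E → F} (hH : ContDiff ℝ n H)
    (a b : ℝ) : ContDiff ℝ n (fun x => ∫ t in a..b, H (t, x)) := by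
  suffices ∀ (m : ℕ) {H : ℝ × E → F}, ContDiff ℝ m H →
      ContDiff ℝ m (fun x => ∫ t in a..b, H (t, x)) by
    induction n using ENat.recTopCoe with
    | top => exact contDiff_infty.mpr fun m => this m (hH.of_le (by exact_mod_cast le_top))
    | coe m => exact this m hH
  intro m
  induction m with
  | zero =>
    intro H hH
    exact contDiff_zero.mpr
      (intervalIntegral.continuous_parametric_intervalIntegral_of_continuous'
        (f := fun x t => H (t, x)) (hH.continuous.comp continuous_swap) a b)
  | succ m ih =>
    intro H hH
    have hH₁ : ContDiff ℝ 1 H := hH.of_le (by simp)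
    rw [Nat.cast_succ, contDiff_succ_iff_fderiv_apply]
    refine ⟨fun x => (hasFDerivAt_intervalIntegral_of_contDiff hH₁ a b x).differentiableAt,
      fun h => absurd h (WithTop.natCast_ne_top m), fun v => ?_⟩
    simp_rw [fderiv_intervalIntegral_apply_of_contDiff hH₁]
    exact ih ((hH.fderiv_right (m := m) (by push_cast; rfl)).clm_apply contDiff_const)

end ParametricIntegral

section SmoothExtension

variable {E F : Type*} [NormedAddCommGroup E] [NormedSpace ℝ E] [FiniteDimensional ℝ E]
  [NormedAddCommGroup F] [NormedSpace ℝ F]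

theorem exists_contDiff_eventuallyEq_nhdsSet {n : ℕ∞} {Ω K : Set E} {f : E → F}
    (hΩ : IsOpen Ω) (hf : ContDiffOn ℝ n f Ω) (hK : IsCompact K) (hKΩ : K ⊆ Ω) :
    ∃ g : E → F, ContDiff ℝ n g ∧ g =ᶠ[𝓝ˢ K] f := by
  obtain ⟨L, hLc, hKL, hLΩ⟩ := exists_compact_between hK hΩ hKΩ
  obtain ⟨χ, hχK, hχL, -⟩ :=
    exists_contMDiffMap_one_nhds_of_subset_interior (n := n) 𝓘(ℝ, E) hK.isClosed hKL
  refine ⟨fun x => χ x • f x, contDiff_iff_contDiffAt.mpr fun x => ?_,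
    hχK.mono fun x hx => by simp [hx]⟩
  by_cases hx : x ∈ Ω
  · exact χ.contMDiff.contDiff.contDiffAt.smul (hf.contDiffAt (hΩ.mem_nhds hx))
  · refine (contDiffAt_const (c := (0 : F))).congr_of_eventuallyEq ?_
    filter_upwards [hLc.isClosed.isOpen_compl.mem_nhds fun h => hx (hLΩ h)] with y hy
    simp [hχL y hy]

end SmoothExtension

section RadialIntegral

variable {E : Type*} [NormedAddCommGroup E] [NormedSpace ℝ E]

noncomputable def radialIntegral (f : E → ℝ) (p : E) : ℝ :=
  ∫ s in (0:ℝ)..1, s * f (s • p)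

theorem sq_mul_radialIntegral_smul (f : E → ℝ) (p : E) (t : ℝ) :
    t ^ 2 * radialIntegral f (t • p) = ∫ u in (0:ℝ)..t, u * f (u • p) := by
  calc t ^ 2 * radialIntegral f (t • p)
      = t * ∫ s in (0:ℝ)..1, (s * t) * f ((s * t) • p) := by
        rw [radialIntegral, ← intervalIntegral.integral_const_mul,
          ← intervalIntegral.integral_const_mul]
        congr 1 with s
        rw [smul_smul]
        ring
    _ = ∫ u in (0:ℝ)..t, u * f (u • p) := by
        rw [intervalIntegral.mul_integral_comp_mul_right (f := fun u => u * f (u • p))]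
        simp

theorem two_mul_radialIntegral_add_fderiv_apply_self {f : E → ℝ} {p : E} (hf : Continuous f)
    (hd : DifferentiableAt ℝ (radialIntegral f) p) :
    2 * radialIntegral f p + fderiv ℝ (radialIntegral f) p p = f p := by
  have h_ray : HasDerivAt (fun t : ℝ => t • p) p 1 := by
    simpa using (hasDerivAt_id (1 : ℝ)).smul_const p
  have h_lhs : HasDerivAt (fun t : ℝ => t ^ 2 * radialIntegral f (t • p))
      (2 * radialIntegral f p + fderiv ℝ (radialIntegral f) p p) 1 := by
    have hd' : HasFDerivAt (radialIntegral f) (fderiv ℝ (radialIntegral f) p) ((1 : ℝ) • p) := by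
      rw [one_smul]; exact hd.hasFDerivAt
    simpa [Function.comp_def] using
      (hasDerivAt_pow 2 (1 : ℝ)).fun_mul (hd'.comp_hasDerivAt 1 h_ray)
  have h_cont : Continuous fun u : ℝ => u * f (u • p) := by fun_prop
  have h_rhs : HasDerivAt (fun t : ℝ => ∫ u in (0:ℝ)..t, u * f (u • p)) (f p) 1 := by
    simpa using intervalIntegral.integral_hasDerivAt_right (h_cont.intervalIntegrable 0 1)
      (h_cont.stronglyMeasurableAtFilter _ _) h_cont.continuousAt
  simp_rw [sq_mul_radialIntegral_smul] at h_lhs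
  exact h_lhs.unique h_rhs

theorem radialIntegral_eventuallyEq {f g : E → ℝ} {p : E}
    (h : f =ᶠ[𝓝ˢ ((· • p) '' Icc (0:ℝ) 1)] g) :
    radialIntegral f =ᶠ[𝓝 p] radialIntegral g := by
  obtain ⟨U, hU, hKU, hUfg⟩ := mem_nhdsSet_iff_exists.mp h
  have h_tube : ∀ᶠ q in 𝓝 p, ∀ s ∈ Icc (0:ℝ) 1, s • q ∈ U :=
    isCompact_Icc.eventually_forall_of_forall_eventually fun s hs =>
      (continuous_snd.smul continuous_fst).continuousAt.preimage_mem_nhds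
        (hU.mem_nhds (hKU ⟨s, hs, rfl⟩))
  filter_upwards [h_tube] with q hq
  refine intervalIntegral.integral_congr fun s hs => ?_
  rw [uIcc_of_le zero_le_one] at hs
  rw [show f (s • q) = g (s • q) from hUfg (hq s hs)]

variable [FiniteDimensional ℝ E]

theorem contDiff_radialIntegral {n : ℕ∞} {f : E → ℝ} (hf : ContDiff ℝ n f) :
    ContDiff ℝ n (radialIntegral f) :=
  contDiff_intervalIntegral_of_contDiff (H := fun q : ℝ × E => q.1 * f (q.1 • q.2))
    (contDiff_fst.mul (hf.comp (contDiff_fst.smul contDiff_snd))) 0 1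

theorem StarConvex.exists_contDiff_radialIntegral_eventuallyEq {n : ℕ∞} {Ω : Set E} {f : E → ℝ}
    {p : E} (hstar : StarConvex ℝ 0 Ω) (hΩ : IsOpen Ω) (hf : ContDiffOn ℝ n f Ω) (hp : p ∈ Ω) :
    ∃ g : E → ℝ, ContDiff ℝ n g ∧ g p = f p ∧ radialIntegral g =ᶠ[𝓝 p] radialIntegral f := by
  have hK : IsCompact ((· • p) '' Icc (0:ℝ) 1) := isCompact_Icc.image (by fun_prop)
  have hKΩ : (· • p) '' Icc (0:ℝ) 1 ⊆ Ω := by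
    rintro _ ⟨s, hs, rfl⟩
    exact hstar.smul_mem hp hs.1 hs.2
  obtain ⟨g, hg, hgf⟩ := exists_contDiff_eventuallyEq_nhdsSet hΩ hf hK hKΩ
  exact ⟨g, hg, hgf.self_of_nhdsSet ⟨1, ⟨zero_le_one, le_rfl⟩, one_smul ℝ p⟩,
    radialIntegral_eventuallyEq hgf⟩

theorem StarConvex.contDiffOn_radialIntegral {n : ℕ∞} {Ω : Set E} {f : E → ℝ}
    (hstar : StarConvex ℝ 0 Ω) (hΩ : IsOpen Ω) (hf : ContDiffOn ℝ n f Ω) :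
    ContDiffOn ℝ n (radialIntegral f) Ω := fun p hp => by
  obtain ⟨g, hg, -, hgf⟩ := hstar.exists_contDiff_radialIntegral_eventuallyEq hΩ hf hp
  exact ((contDiff_radialIntegral hg).contDiffAt.congr_of_eventuallyEq hgf.symm).contDiffWithinAt

theorem StarConvex.two_mul_radialIntegral_add_fderiv_apply_self {Ω : Set E} {f : E → ℝ} {p : E}
    (hstar : StarConvex ℝ 0 Ω) (hΩ : IsOpen Ω) (hf : ContDiffOn ℝ 1 f Ω) (hp : p ∈ Ω) :
    2 * radialIntegral f p + fderiv ℝ (radialIntegral f) p p = f p := by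
  obtain ⟨g, hg, hgp, hgf⟩ := hstar.exists_contDiff_radialIntegral_eventuallyEq (n := 1) hΩ hf hp
  rw [← hgf.eq_of_nhds, ← hgf.fderiv_eq, ← hgp]
  exact _root_.two_mul_radialIntegral_add_fderiv_apply_self hg.continuous
    ((contDiff_radialIntegral hg).differentiable one_ne_zero p)

end RadialIntegral

theorem pdx_fst_mul_sub_pdy_snd_mul {C : ℝ × ℝ → ℝ} {p : ℝ × ℝ} (hC : DifferentiableAt ℝ C p)
    (c : ℝ) :
    pdx (fun q => c * q.1 * C q) p - pdy (fun q => -c * q.2 * C q) p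
      = c * (2 * C p + fderiv ℝ C p p) := by
  have hx := (hasFDerivAt_fst.const_mul c).fun_mul hC.hasFDerivAt
  have hy := (hasFDerivAt_snd.const_mul (-c)).fun_mul hC.hasFDerivAt
  have h_euler : fderiv ℝ C p p = p.1 * fderiv ℝ C p (1, 0) + p.2 * fderiv ℝ C p (0, 1) := by
    calc fderiv ℝ C p p = fderiv ℝ C p (p.1 • (1, 0) + p.2 • (0, 1)) := by congr 1; ext <;> simp
      _ = _ := by rw [map_add, map_smul, map_smul, smul_eq_mul, smul_eq_mul]
  rw [pdx, pdy, hx.fderiv, hy.fderiv, h_euler]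
  simp only [add_apply, smul_apply, smul_eq_mul,
    ContinuousLinearMap.coe_fst', ContinuousLinearMap.coe_snd', neg_apply,
    mul_one, neg_mul, neg_smul, smul_neg]
  ring

theorem calabiPotential_eq_two_mul_radialIntegral (l₁ l₂ μ τ : ℝ × ℝ → ℝ) :
    calabiPotential l₁ l₂ μ τ =
      fun p => 2 * radialIntegral (fun q => τ q * l₁ q * l₂ q / μ q) p := by
  funext p
  simp only [calabiPotential, radialIntegral, mul_div_assoc, mul_assoc]

theorem calabi_potential_solves_bundle_curvature_general
    (Ω : Set (ℝ × ℝ)) (hΩ_open : IsOpen Ω)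
    (hstar : StarConvex ℝ (0 : ℝ × ℝ) Ω)
    (ε : ℝ)
    (l₁ l₂ μ τ : ℝ × ℝ → ℝ)
    (hl₁ : ContDiffOn ℝ (⊤ : ℕ∞) l₁ Ω) (hl₂ : ContDiffOn ℝ (⊤ : ℕ∞) l₂ Ω)
    (hμ : ContDiffOn ℝ (⊤ : ℕ∞) μ Ω) (hτ : ContDiffOn ℝ (⊤ : ℕ∞) τ Ω)
    (hl₁pos : ∀ p ∈ Ω, 0 < l₁ p) (hl₂pos : ∀ p ∈ Ω, 0 < l₂ p)
    (hμpos : ∀ p ∈ Ω, 0 < μ p)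
    (a b : ℝ × ℝ → ℝ)
    (haDef : ∀ p, a p = -ε * p.2 * calabiPotential l₁ l₂ μ τ p / l₁ p)
    (hbDef : ∀ p, b p = ε * p.1 * calabiPotential l₁ l₂ μ τ p / l₂ p) :
    ContDiffOn ℝ (⊤ : ℕ∞) a Ω ∧ ContDiffOn ℝ (⊤ : ℕ∞) b Ω ∧
    ∀ p ∈ Ω,
      pdx (fun q => l₂ q * b q) p - pdy (fun q => l₁ q * a q) p
        = 2 * ε * τ p * l₁ p * l₂ p / μ p := by
  set f : ℝ × ℝ → ℝ := fun q => τ q * l₁ q * l₂ q / μ q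
  have hf : ContDiffOn ℝ (⊤ : ℕ∞) f Ω :=
    ((hτ.mul hl₁).mul hl₂).div hμ fun q hq => (hμpos q hq).ne'
  have hC_eq : calabiPotential l₁ l₂ μ τ = fun q => 2 * radialIntegral f q :=
    calabiPotential_eq_two_mul_radialIntegral l₁ l₂ μ τ
  have hΨ := hstar.contDiffOn_radialIntegral hΩ_open hf
  have hC : ContDiffOn ℝ (⊤ : ℕ∞) (calabiPotential l₁ l₂ μ τ) Ω :=
    hC_eq ▸ contDiffOn_const.mul hΨ
  refine ⟨(((contDiffOn_const.mul contDiff_snd.contDiffOn).mul hC).div hl₁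
      fun q hq => (hl₁pos q hq).ne').congr fun q _ => haDef q,
    (((contDiffOn_const.mul contDiff_fst.contDiffOn).mul hC).div hl₂
      fun q hq => (hl₂pos q hq).ne').congr fun q _ => hbDef q, fun p hp => ?_⟩
  have hb : (fun q => l₂ q * b q) =ᶠ[𝓝 p] fun q => (2 * ε) * q.1 * radialIntegral f q := by
    filter_upwards [hΩ_open.mem_nhds hp] with q hq
    rw [hbDef, hC_eq]
    field_simp [(hl₂pos q hq).ne']
  have ha : (fun q => l₁ q * a q) =ᶠ[𝓝 p] fun q => -(2 * ε) * q.2 * radialIntegral f q := by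
    filter_upwards [hΩ_open.mem_nhds hp] with q hq
    rw [haDef, hC_eq]
    field_simp [(hl₁pos q hq).ne']
  have hΨp : DifferentiableAt ℝ (radialIntegral f) p :=
    (hΨ.contDiffAt (hΩ_open.mem_nhds hp)).differentiableAt (by simp)
  calc pdx (fun q => l₂ q * b q) p - pdy (fun q => l₁ q * a q) p
      = pdx (fun q => (2 * ε) * q.1 * radialIntegral f q) p
          - pdy (fun q => -(2 * ε) * q.2 * radialIntegral f q) p := by
        simp only [pdx, pdy, hb.fderiv_eq, ha.fderiv_eq]
    _ = 2 * ε * (2 * radialIntegral f p + fderiv ℝ (radialIntegral f) p p) :=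
        pdx_fst_mul_sub_pdy_snd_mul hΨp _
    _ = 2 * ε * τ p * l₁ p * l₂ p / μ p := by
        rw [hstar.two_mul_radialIntegral_add_fderiv_apply_self hΩ_open (hf.of_le (by simp)) hp]
        simp only [f]
        ring

/-- The Calabi potential construction produces smooth data `a`, `b` solving the bundle
curvature equation `∂ₓ(λ₂b) − ∂_y(λ₁a) = 2ετλ₁λ₂/μ` on a star-shaped domain. -/
theorem calabi_potential_solves_bundle_curvature
    (Ω : Set (ℝ × ℝ)) (hΩ_open : IsOpen Ω) (h0 : (0 : ℝ × ℝ) ∈ Ω)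
    (hstar : StarConvex ℝ (0 : ℝ × ℝ) Ω)
    (ε : ℝ) (hε : ε = 1 ∨ ε = -1)
    (l₁ l₂ μ τ : ℝ × ℝ → ℝ)
    (hl₁ : ContDiffOn ℝ (⊤ : ℕ∞) l₁ Ω) (hl₂ : ContDiffOn ℝ (⊤ : ℕ∞) l₂ Ω)
    (hμ : ContDiffOn ℝ (⊤ : ℕ∞) μ Ω) (hτ : ContDiffOn ℝ (⊤ : ℕ∞) τ Ω)
    (hl₁pos : ∀ p ∈ Ω, 0 < l₁ p) (hl₂pos : ∀ p ∈ Ω, 0 < l₂ p)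
    (hμpos : ∀ p ∈ Ω, 0 < μ p)
    (a b : ℝ × ℝ → ℝ)
    (haDef : ∀ p, a p = -ε * p.2 * calabiPotential l₁ l₂ μ τ p / l₁ p)
    (hbDef : ∀ p, b p = ε * p.1 * calabiPotential l₁ l₂ μ τ p / l₂ p) :
    ContDiffOn ℝ (⊤ : ℕ∞) a Ω ∧ ContDiffOn ℝ (⊤ : ℕ∞) b Ω ∧
    ∀ p ∈ Ω,
      pdx (fun q => l₂ q * b q) p - pdy (fun q => l₁ q * a q) p
        = 2 * ε * τ p * l₁ p * l₂ p / μ p :=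
  calabi_potential_solves_bundle_curvature_general Ω hΩ_open hstar ε l₁ l₂ μ τ hl₁ hl₂ hμ hτ hl₁pos
    hl₂pos hμpos a b haDef hbDef
end

section
/- Let R ∈ (0, +∞], let Ω ⊆ ℝ² be the open disk of radius R centered at the origin, and let λ, μ, H : Ω → ℝ be smooth rotationally invariant functions (i.e. functions of x² + y² only) with λ > 0 and μ > 0. Then there exists a smooth function v : Ω → ℝ satisfying the spacelike condition μ²(vₓ² + v_y²) < λ² on Ω and the prescribed mean curvature equation ∂ₓ(μ²vₓ/ω̃) + ∂_y(μ²v_y/ω̃) = 2Hμλ² on Ω, where ω̃ = √(1 − μ²(vₓ² + v_y²)/λ²); that is, the Lorentzian warped product 𝕃(M,0,μ) over M = (Ω, λ²(dx² + dy²)) admits an entire spacelike graph with prescribed mean curvature H. -/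
open Set Topology MeasureTheory
open scoped ContDiff Interval

universe u

noncomputable def rayIntegral {F E : Type*} [AddCommGroup F] [Module ℝ F] [NormedAddCommGroup E]
    [NormedSpace ℝ E] (k : ℕ) (g : F → E) (p : F) : E :=
  ∫ t in (0 : ℝ)..1, t ^ k • g (t • p)

section RayIntegral

variable {F E : Type u} [NormedAddCommGroup F] [NormedSpace ℝ F] [NormedAddCommGroup E]
  [NormedSpace ℝ E] {Ω : Set F} {g : F → E} {p : F}

theorem intervalIntegrable_pow_smul_comp_smul (hΩ : StarConvex ℝ 0 Ω) (hg : ContinuousOn g Ω)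
    (hp : p ∈ Ω) (k : ℕ) : IntervalIntegrable (fun t : ℝ => t ^ k • g (t • p)) volume 0 1 :=
  ContinuousOn.intervalIntegrable_of_Icc zero_le_one <|
    (continuousOn_pow k).smul <| hg.comp (by fun_prop) fun _ ht => hΩ.smul_mem hp ht.1 ht.2

theorem hasFDerivAt_rayIntegral [ProperSpace F] (hΩo : IsOpen Ω) (hΩ : StarConvex ℝ 0 Ω)
    (hg : ContDiffOn ℝ 1 g Ω) (hp : p ∈ Ω) (k : ℕ) :
    HasFDerivAt (rayIntegral k g) (rayIntegral (k + 1) (fderiv ℝ g) p) p := by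
  obtain ⟨ε, hε, hball⟩ : ∃ ε > 0, Metric.closedBall p ε ⊆ Ω := by
    obtain ⟨ε, hε, h⟩ := Metric.isOpen_iff.1 hΩo p hp
    exact ⟨ε / 2, by positivity, (Metric.closedBall_subset_ball (by linarith)).trans h⟩
  have hDg : ContinuousOn (fderiv ℝ g) Ω := hg.continuousOn_fderiv_of_isOpen hΩo le_rfl
  have hmaps : MapsTo (fun z : ℝ × F => z.1 • z.2) (Icc 0 1 ×ˢ Metric.closedBall p ε) Ω :=
    fun z hz => hΩ.smul_mem (hball hz.2) hz.1.1 hz.1.2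
  obtain ⟨C, hC⟩ := (isCompact_Icc.prod (isCompact_closedBall p ε)).image
    (f := fun z : ℝ × F => z.1 • z.2) (by fun_prop) |>.exists_bound_of_continuousOn
    (hDg.mono hmaps.image_subset)
  have hIoc : Ι (0 : ℝ) 1 ⊆ Icc 0 1 := by
    rw [uIoc_of_le zero_le_one]; exact Ioc_subset_Icc_self
  refine intervalIntegral.hasFDerivAt_integral_of_dominated_of_fderiv_le (bound := fun _ => C)
    (F := fun x t => t ^ k • g (t • x)) (F' := fun x t => t ^ (k + 1) • fderiv ℝ g (t • x))
    (Metric.ball_mem_nhds p hε) ?_ (intervalIntegrable_pow_smul_comp_smul hΩ hg.continuousOn hp k)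
    (intervalIntegrable_pow_smul_comp_smul hΩ hDg hp (k + 1)).def'.aestronglyMeasurable
    ?_ intervalIntegrable_const ?_
  · filter_upwards [Metric.ball_mem_nhds p hε] with x hx
    exact (intervalIntegrable_pow_smul_comp_smul hΩ hg.continuousOn
      (hball (Metric.ball_subset_closedBall hx)) k).def'.aestronglyMeasurable
  · refine .of_forall fun t ht x hx => ?_
    have ht : t ∈ Icc (0 : ℝ) 1 := hIoc ht
    calc ‖t ^ (k + 1) • fderiv ℝ g (t • x)‖ = |t| ^ (k + 1) * ‖fderiv ℝ g (t • x)‖ := by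
          rw [norm_smul, norm_pow, Real.norm_eq_abs]
      _ ≤ 1 * C := by
          gcongr
          · exact pow_le_one₀ (abs_nonneg t) (abs_le.2 ⟨by linarith [ht.1], ht.2⟩)
          · exact hC _ ⟨(t, x), ⟨ht, Metric.ball_subset_closedBall hx⟩, rfl⟩
      _ = C := one_mul C
  · refine .of_forall fun t ht x hx => ?_
    have htx : t • x ∈ Ω :=
      hΩ.smul_mem (hball (Metric.ball_subset_closedBall hx)) (hIoc ht).1 (hIoc ht).2
    have hgt : HasFDerivAt g (fderiv ℝ g (t • x)) (t • x) :=
      ((hg.contDiffAt (hΩo.mem_nhds htx)).differentiableAt one_ne_zero).hasFDerivAt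
    refine ((hgt.comp x ((hasFDerivAt_id x).const_smul t)).const_smul (t ^ k)).congr_fderiv ?_
    ext v
    simp [pow_succ, smul_smul]

theorem contDiffOn_rayIntegral [ProperSpace F] (hΩo : IsOpen Ω) (hΩ : StarConvex ℝ 0 Ω)
    (hg : ContDiffOn ℝ ∞ g Ω) (k : ℕ) : ContDiffOn ℝ ∞ (rayIntegral k g) Ω := by
  refine contDiffOn_infty.2 fun n => ?_
  induction n generalizing E k g with
  | zero =>
    exact contDiffOn_zero.2 fun p hp =>
      (hasFDerivAt_rayIntegral hΩo hΩ (hg.of_le (by simp)) hp k).continuousAt.continuousWithinAt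
  | succ n ih =>
    have hg1 : ContDiffOn ℝ 1 g Ω := hg.of_le (by simp)
    rw [Nat.cast_succ, contDiffOn_succ_iff_fderiv_of_isOpen hΩo]
    refine ⟨fun p hp => (hasFDerivAt_rayIntegral hΩo hΩ hg1 hp k).differentiableAt
      |>.differentiableWithinAt, by simp, ?_⟩
    exact (ih (hg.fderiv_of_isOpen hΩo (by simp)) (k + 1)).congr fun p hp =>
      (hasFDerivAt_rayIntegral hΩo hΩ hg1 hp k).fderiv

theorem fderiv_rayIntegral_apply_self [CompleteSpace E] [ProperSpace F] (hΩo : IsOpen Ω)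
    (hΩ : StarConvex ℝ 0 Ω) (hg : ContDiffOn ℝ 1 g Ω) (hp : p ∈ Ω) (k : ℕ) :
    fderiv ℝ (rayIntegral k g) p p = g p - ((k : ℝ) + 1) • rayIntegral k g p := by
  have hDg : ContinuousOn (fderiv ℝ g) Ω := hg.continuousOn_fderiv_of_isOpen hΩo le_rfl
  have hint : IntervalIntegrable (fun t : ℝ => ((k : ℝ) + 1) • t ^ k • g (t • p)) volume 0 1 :=
    (intervalIntegrable_pow_smul_comp_smul hΩ hg.continuousOn hp k).smul _
  have hint' : IntervalIntegrable (fun t : ℝ => t ^ (k + 1) • fderiv ℝ g (t • p) p) volume 0 1 :=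
    intervalIntegrable_pow_smul_comp_smul (g := fun q => fderiv ℝ g q p) hΩ
      (hDg.clm_apply continuousOn_const) hp (k + 1)
  have hderiv : ∀ t ∈ uIcc (0 : ℝ) 1, HasDerivAt (fun t : ℝ => t ^ (k + 1) • g (t • p))
      (t ^ (k + 1) • fderiv ℝ g (t • p) p + ((k : ℝ) + 1) • t ^ k • g (t • p)) t := by
    intro t ht
    rw [uIcc_of_le zero_le_one] at ht
    have htp : t • p ∈ Ω := hΩ.smul_mem hp ht.1 ht.2
    have hgt : HasDerivAt (fun t : ℝ => g (t • p)) (fderiv ℝ g (t • p) p) t := by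
      simpa [Function.comp_def] using
        ((hg.contDiffAt (hΩo.mem_nhds htp)).differentiableAt one_ne_zero).hasFDerivAt
          |>.comp_hasDerivAt t ((hasDerivAt_id' t).smul_const p)
    exact ((hasDerivAt_pow (k + 1) t).smul hgt).congr_deriv (by simp [smul_smul])
  have hftc := intervalIntegral.integral_eq_sub_of_hasDerivAt hderiv (hint'.add hint)
  rw [intervalIntegral.integral_add hint' hint, intervalIntegral.integral_smul] at hftc
  rw [one_pow, one_smul, one_smul, zero_pow k.succ_ne_zero, zero_smul, sub_zero] at hftc
  rw [(hasFDerivAt_rayIntegral hΩo hΩ hg hp k).fderiv, rayIntegral,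
    ContinuousLinearMap.intervalIntegral_apply (intervalIntegrable_pow_smul_comp_smul hΩ hDg hp _)]
  exact eq_sub_of_add_eq hftc

end RayIntegral

def IsRadialOn {α : Type*} (g : ℝ × ℝ → α) (Ω : Set (ℝ × ℝ)) : Prop :=
  ∀ p ∈ Ω, ∀ q ∈ Ω, p.1 ^ 2 + p.2 ^ 2 = q.1 ^ 2 + q.2 ^ 2 → g p = g q

theorem isOpen_setOf_sq_add_sq_lt (R : ℝ) : IsOpen {p : ℝ × ℝ | p.1 ^ 2 + p.2 ^ 2 < R ^ 2} :=
  isOpen_lt (by fun_prop) continuous_const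

theorem starConvex_setOf_sq_add_sq_lt (R : ℝ) :
    StarConvex ℝ 0 {p : ℝ × ℝ | p.1 ^ 2 + p.2 ^ 2 < R ^ 2} := by
  refine starConvex_zero_iff.2 fun p hp t ht₀ ht₁ => ?_
  simp only [mem_ofPred_eq, Prod.smul_fst, Prod.smul_snd, smul_eq_mul] at hp ⊢
  nlinarith [mul_le_mul_of_nonneg_right (pow_le_one₀ ht₀ ht₁ : t ^ 2 ≤ 1)
    (by positivity : 0 ≤ p.1 ^ 2 + p.2 ^ 2)]

theorem fderiv_apply_eq_pdx_pdy (f : ℝ × ℝ → ℝ) (p v : ℝ × ℝ) :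
    fderiv ℝ f p v = v.1 * pdx f p + v.2 * pdy f p := by
  conv_lhs => rw [show v = v.1 • ((1 : ℝ), (0 : ℝ)) + v.2 • ((0 : ℝ), (1 : ℝ)) by simp]
  rw [map_add, map_smul, map_smul, smul_eq_mul, smul_eq_mul, pdx, pdy]

section Plane

variable {Ω : Set (ℝ × ℝ)} {p : ℝ × ℝ}

theorem IsRadialOn.rayIntegral {E : Type*} [NormedAddCommGroup E] [NormedSpace ℝ E]
    {g : ℝ × ℝ → E} (hg : IsRadialOn g Ω) (hΩ : StarConvex ℝ 0 Ω) (k : ℕ) :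
    IsRadialOn (rayIntegral k g) Ω := by
  intro p hp q hq h
  refine intervalIntegral.integral_congr fun t ht => ?_
  rw [uIcc_of_le zero_le_one] at ht
  rw [hg _ (hΩ.smul_mem hp ht.1 ht.2) _ (hΩ.smul_mem hq ht.1 ht.2) (by
    simp only [Prod.smul_fst, Prod.smul_snd, smul_eq_mul]; linear_combination t ^ 2 * h)]

/-- `θ ↦ g (R_θ p)` is constant near `0`, with derivative `fderiv ℝ g p (-p.2, p.1)` there. -/
theorem IsRadialOn.fderiv_apply_rotation {E : Type*} [NormedAddCommGroup E] [NormedSpace ℝ E]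
    {g : ℝ × ℝ → E} (hg : IsRadialOn g Ω) (hΩ : IsOpen Ω) (hp : p ∈ Ω)
    (hd : DifferentiableAt ℝ g p) : fderiv ℝ g p (-p.2, p.1) = 0 := by
  set c : ℝ → ℝ × ℝ := fun θ =>
    (Real.cos θ * p.1 - Real.sin θ * p.2, Real.sin θ * p.1 + Real.cos θ * p.2)
  have hc0 : c 0 = p := by simp [c]
  have hc : HasDerivAt c (-p.2, p.1) 0 := by
    refine ((((Real.hasDerivAt_cos 0).mul_const p.1).sub
      ((Real.hasDerivAt_sin 0).mul_const p.2)).prodMk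
      (((Real.hasDerivAt_sin 0).mul_const p.1).add
        ((Real.hasDerivAt_cos 0).mul_const p.2))).congr_deriv ?_
    simp
  have hconst : (fun θ => g (c θ)) =ᶠ[𝓝 0] fun _ => g p := by
    filter_upwards [hc.continuousAt.preimage_mem_nhds (hc0 ▸ hΩ.mem_nhds hp)] with θ hθ
    refine hg _ hθ _ hp ?_
    simp only [c]
    linear_combination (p.1 ^ 2 + p.2 ^ 2) * Real.sin_sq_add_cos_sq θ
  have hgc : HasFDerivAt g (fderiv ℝ g p) (c 0) := hc0 ▸ hd.hasFDerivAt
  exact (hgc.comp_hasDerivAt 0 hc).unique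
    ((hasDerivAt_const 0 (g p)).congr_of_eventuallyEq hconst)

variable {g : ℝ × ℝ → ℝ}

theorem pdx_add_pdy_eq_of_eqOn_rayIntegral_mul (hΩo : IsOpen Ω) (hΩ : StarConvex ℝ 0 Ω)
    (hg : ContDiffOn ℝ 1 g Ω) {f₁ f₂ : ℝ × ℝ → ℝ}
    (h₁ : EqOn f₁ (fun q => rayIntegral 1 g q * q.1) Ω)
    (h₂ : EqOn f₂ (fun q => rayIntegral 1 g q * q.2) Ω) (hp : p ∈ Ω) :
    pdx f₁ p + pdy f₂ p = g p := by
  have hA := hasFDerivAt_rayIntegral hΩo hΩ hg hp 1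
  have hEuler := fderiv_rayIntegral_apply_self hΩo hΩ hg hp 1
  rw [fderiv_apply_eq_pdx_pdy, pdx, pdy, hA.fderiv] at hEuler
  rw [pdx, pdy, (h₁.eventuallyEq_of_mem (hΩo.mem_nhds hp)).fderiv_eq,
    (h₂.eventuallyEq_of_mem (hΩo.mem_nhds hp)).fderiv_eq, (hA.fun_mul hasFDerivAt_fst).fderiv,
    (hA.fun_mul hasFDerivAt_snd).fderiv]
  simp only [add_apply, smul_apply, ContinuousLinearMap.coe_fst', ContinuousLinearMap.coe_snd',
    smul_eq_mul] at hEuler ⊢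
  push_cast at hEuler
  linear_combination hEuler

theorem pdx_pdy_rayIntegral_mul_sq_add_sq (hΩo : IsOpen Ω) (hΩ : StarConvex ℝ 0 Ω)
    (hg : ContDiffOn ℝ 1 g Ω) (hrad : IsRadialOn g Ω) (hp : p ∈ Ω) :
    pdx (fun q => rayIntegral 1 g q * (q.1 ^ 2 + q.2 ^ 2)) p = g p * p.1 ∧
      pdy (fun q => rayIntegral 1 g q * (q.1 ^ 2 + q.2 ^ 2)) p = g p * p.2 := by
  have hA := hasFDerivAt_rayIntegral hΩo hΩ hg hp 1
  have hEuler := fderiv_rayIntegral_apply_self hΩo hΩ hg hp 1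
  have hrot := (hrad.rayIntegral hΩ 1).fderiv_apply_rotation hΩo hp hA.differentiableAt
  rw [fderiv_apply_eq_pdx_pdy, pdx, pdy, hA.fderiv] at hEuler hrot
  have hv := hA.fun_mul
    ((HasFDerivAt.pow hasFDerivAt_fst 2).fun_add (HasFDerivAt.pow hasFDerivAt_snd 2))
  rw [pdx, pdy, hv.fderiv]
  simp only [add_apply, smul_apply, ContinuousLinearMap.coe_fst', ContinuousLinearMap.coe_snd',
    smul_eq_mul] at hEuler hrot ⊢
  push_cast at hEuler
  constructor
  · linear_combination p.1 * hEuler - p.2 * hrot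
  · linear_combination p.2 * hEuler + p.1 * hrot

end Plane

/-- The equation `μ² ψ / ω̃ = Φ` for the slope `ψ` of a radial gradient `∇v = ψ p`, `r2 = |p|²`,
solved for `ψ`. -/
noncomputable def fluxSlope (l m Φ r2 : ℝ) : ℝ :=
  Φ / √(m ^ 4 + Φ ^ 2 * m ^ 2 * r2 / l ^ 2)

section FluxSlope

variable {l m : ℝ}

theorem fluxSlope_radicand_pos (hm : m ≠ 0) (Φ : ℝ) {r2 : ℝ} (hr : 0 ≤ r2) :
    0 < m ^ 4 + Φ ^ 2 * m ^ 2 * r2 / l ^ 2 := by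
  positivity

theorem one_sub_mul_fluxSlope_sq (hl : l ≠ 0) (hm : m ≠ 0) (Φ x y : ℝ) :
    1 - m ^ 2 * ((fluxSlope l m Φ (x ^ 2 + y ^ 2) * x) ^ 2 +
        (fluxSlope l m Φ (x ^ 2 + y ^ 2) * y) ^ 2) / l ^ 2 =
      m ^ 4 / (m ^ 4 + Φ ^ 2 * m ^ 2 * (x ^ 2 + y ^ 2) / l ^ 2) := by
  have hD := fluxSlope_radicand_pos hm Φ (l := l) (by positivity : 0 ≤ x ^ 2 + y ^ 2)
  rw [fluxSlope, mul_pow, mul_pow, div_pow, Real.sq_sqrt hD.le]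
  field_simp
  ring

theorem mul_sq_fluxSlope_lt (hl : l ≠ 0) (hm : m ≠ 0) (Φ x y : ℝ) :
    m ^ 2 * ((fluxSlope l m Φ (x ^ 2 + y ^ 2) * x) ^ 2 +
      (fluxSlope l m Φ (x ^ 2 + y ^ 2) * y) ^ 2) < l ^ 2 := by
  have h := one_sub_mul_fluxSlope_sq hl hm Φ x y
  have hpos : 0 < m ^ 4 / (m ^ 4 + Φ ^ 2 * m ^ 2 * (x ^ 2 + y ^ 2) / l ^ 2) :=
    div_pos (by positivity) (fluxSlope_radicand_pos hm Φ (by positivity))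
  rw [← h, sub_pos, div_lt_one (by positivity)] at hpos
  exact hpos

theorem sq_div_sqrt_one_sub_mul_fluxSlope (hl : l ≠ 0) (hm : m ≠ 0) (Φ x y : ℝ) :
    m ^ 2 / √(1 - m ^ 2 * ((fluxSlope l m Φ (x ^ 2 + y ^ 2) * x) ^ 2 +
        (fluxSlope l m Φ (x ^ 2 + y ^ 2) * y) ^ 2) / l ^ 2) *
      fluxSlope l m Φ (x ^ 2 + y ^ 2) = Φ := by
  have hD := fluxSlope_radicand_pos hm Φ (l := l) (by positivity : 0 ≤ x ^ 2 + y ^ 2)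
  rw [one_sub_mul_fluxSlope_sq hl hm, Real.sqrt_div' _ hD.le,
    show m ^ 4 = (m ^ 2) ^ 2 by ring, Real.sqrt_sq (by positivity), fluxSlope]
  field_simp

theorem ContDiffOn.fluxSlope {X : Type*} [NormedAddCommGroup X] [NormedSpace ℝ X] {s : Set X}
    {n : WithTop ℕ∞} {l m Φ r2 : X → ℝ} (hl : ContDiffOn ℝ n l s) (hm : ContDiffOn ℝ n m s)
    (hΦ : ContDiffOn ℝ n Φ s) (hr : ContDiffOn ℝ n r2 s) (hl0 : ∀ x ∈ s, l x ≠ 0)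
    (hm0 : ∀ x ∈ s, m x ≠ 0) (hr0 : ∀ x ∈ s, 0 ≤ r2 x) :
    ContDiffOn ℝ n (fun x => _root_.fluxSlope (l x) (m x) (Φ x) (r2 x)) s := by
  have hD : ∀ x ∈ s, 0 < m x ^ 4 + Φ x ^ 2 * m x ^ 2 * r2 x / l x ^ 2 := fun x hx =>
    fluxSlope_radicand_pos (hm0 x hx) _ (hr0 x hx)
  refine hΦ.div (ContDiffOn.sqrt ?_ fun x hx => (hD x hx).ne') fun x hx =>
    (Real.sqrt_pos.2 (hD x hx)).ne'
  exact (hm.pow 4).add ((((hΦ.pow 2).mul (hm.pow 2)).mul hr).div (hl.pow 2)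
    fun x hx => pow_ne_zero 2 (hl0 x hx))

end FluxSlope

/-- A rotationally invariant Lorentzian warped product `𝕃(M,0,μ)` over a disk of radius
`R ∈ (0,+∞]` (with rotationally invariant `λ`, `μ`, `H`) admits an entire spacelike graph
with prescribed mean curvature `H`. -/
theorem entire_spacelike_graph_rotational
    (Ω : Set (ℝ × ℝ))
    (hΩ : Ω = Set.univ ∨ ∃ R : ℝ, 0 < R ∧ Ω = {p : ℝ × ℝ | p.1 ^ 2 + p.2 ^ 2 < R ^ 2})
    (lam μ H : ℝ × ℝ → ℝ)
    (hlam : ContDiffOn ℝ (⊤ : ℕ∞) lam Ω) (hμ : ContDiffOn ℝ (⊤ : ℕ∞) μ Ω)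
    (hH : ContDiffOn ℝ (⊤ : ℕ∞) H Ω)
    (hlampos : ∀ p ∈ Ω, 0 < lam p) (hμpos : ∀ p ∈ Ω, 0 < μ p)
    (hlamrot : ∀ p ∈ Ω, ∀ q ∈ Ω, p.1 ^ 2 + p.2 ^ 2 = q.1 ^ 2 + q.2 ^ 2 → lam p = lam q)
    (hμrot : ∀ p ∈ Ω, ∀ q ∈ Ω, p.1 ^ 2 + p.2 ^ 2 = q.1 ^ 2 + q.2 ^ 2 → μ p = μ q)
    (hHrot : ∀ p ∈ Ω, ∀ q ∈ Ω, p.1 ^ 2 + p.2 ^ 2 = q.1 ^ 2 + q.2 ^ 2 → H p = H q) :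
    ∃ v : ℝ × ℝ → ℝ, ContDiffOn ℝ (⊤ : ℕ∞) v Ω ∧
      (∀ p ∈ Ω, μ p ^ 2 * ((pdx v p) ^ 2 + (pdy v p) ^ 2) < lam p ^ 2) ∧
      (∀ p ∈ Ω,
        pdx (fun q => μ q ^ 2 * pdx v q /
          Real.sqrt (1 - μ q ^ 2 * ((pdx v q) ^ 2 + (pdy v q) ^ 2) / lam q ^ 2)) p
        + pdy (fun q => μ q ^ 2 * pdy v q /
          Real.sqrt (1 - μ q ^ 2 * ((pdx v q) ^ 2 + (pdy v q) ^ 2) / lam q ^ 2)) p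
        = 2 * H p * μ p * lam p ^ 2) := by
  obtain ⟨hΩo, hΩs⟩ : IsOpen Ω ∧ StarConvex ℝ 0 Ω := by
    rcases hΩ with rfl | ⟨R, -, rfl⟩
    exacts [⟨isOpen_univ, starConvex_univ 0⟩,
      ⟨isOpen_setOf_sq_add_sq_lt R, starConvex_setOf_sq_add_sq_lt R⟩]
  have hw : ContDiffOn ℝ ∞ (fun p => 2 * H p * μ p * lam p ^ 2) Ω :=
    ((contDiffOn_const.mul hH).mul hμ).mul (hlam.pow 2)
  set Φ := rayIntegral 1 fun p => 2 * H p * μ p * lam p ^ 2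
  have hΦrad : IsRadialOn Φ Ω := IsRadialOn.rayIntegral (fun p hp q hq h => by
    simp only [hHrot p hp q hq h, hμrot p hp q hq h, hlamrot p hp q hq h]) hΩs 1
  set ψ : ℝ × ℝ → ℝ := fun p => fluxSlope (lam p) (μ p) (Φ p) (p.1 ^ 2 + p.2 ^ 2)
  have hψ : ContDiffOn ℝ ∞ ψ Ω :=
    hlam.fluxSlope hμ (contDiffOn_rayIntegral hΩo hΩs hw 1) (by fun_prop)
      (fun p hp => (hlampos p hp).ne') (fun p hp => (hμpos p hp).ne') fun p _ => by positivity
  have hψrad : IsRadialOn ψ Ω := fun p hp q hq h => by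
    simp only [ψ, hlamrot p hp q hq h, hμrot p hp q hq h, hΦrad p hp q hq h, h]
  set v : ℝ × ℝ → ℝ := fun q => rayIntegral 1 ψ q * (q.1 ^ 2 + q.2 ^ 2)
  have hgrad : ∀ p ∈ Ω, pdx v p = ψ p * p.1 ∧ pdy v p = ψ p * p.2 := fun p hp =>
    pdx_pdy_rayIntegral_mul_sq_add_sq hΩo hΩs (hψ.of_le (by simp)) hψrad hp
  have hflux : ∀ q ∈ Ω,
      μ q ^ 2 / √(1 - μ q ^ 2 * ((pdx v q) ^ 2 + (pdy v q) ^ 2) / lam q ^ 2) * ψ q = Φ q :=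
    fun q hq => by
      rw [(hgrad q hq).1, (hgrad q hq).2]
      exact sq_div_sqrt_one_sub_mul_fluxSlope (hlampos q hq).ne' (hμpos q hq).ne' _ _ _
  refine ⟨v, (contDiffOn_rayIntegral hΩo hΩs hψ 1).mul (by fun_prop), fun p hp => ?_,
    fun p hp => pdx_add_pdy_eq_of_eqOn_rayIntegral_mul hΩo hΩs (hw.of_le (by simp))
      (fun q hq => ?_) (fun q hq => ?_) hp⟩
  · rw [(hgrad p hp).1, (hgrad p hp).2]
    exact mul_sq_fluxSlope_lt (hlampos p hp).ne' (hμpos p hp).ne' _ _ _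
  · show _ = Φ q * q.1
    rw [← hflux q hq, mul_assoc, ← (hgrad q hq).1]
    ring
  · show _ = Φ q * q.2
    rw [← hflux q hq, mul_assoc, ← (hgrad q hq).2]
    ring
end

section
/- Let I ⊆ ℝ be an open interval, let Ω = I × ℝ ⊆ ℝ² be the corresponding strip, and let λ, μ, H : Ω → ℝ be smooth functions depending only on the first coordinate x, with λ > 0 and μ > 0. Then there exists a smooth function v : Ω → ℝ satisfying the spacelike condition μ²(vₓ² + v_y²) < λ² on Ω and the prescribed mean curvature equation ∂ₓ(μ²vₓ/ω̃) + ∂_y(μ²v_y/ω̃) = 2Hμλ² on Ω, where ω̃ = √(1 − μ²(vₓ² + v_y²)/λ²); that is, the Lorentzian warped product 𝕃(M,0,μ) over M = (Ω, λ²(dx² + dy²)) admits an entire spacelike graph with prescribed mean curvature H. -/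
/-!
Since the data depend on `x` alone, look for a graph `v(x, y) = F(x)`. The equation becomes the
ODE `(μ² F' / ω̃)' = 2Hμλ²` with `ω̃ = √(1 - μ² F'² / λ²)`, so the flux `μ² F' / ω̃` must be a
primitive `G` of `2Hμλ²`. This relation can be solved for the slope explicitly,
`F' = G λ / (μ √(μ² λ² + G²))`, and that slope automatically satisfies the spacelike bound
`μ² F'² < λ²`. A second integration gives `F`.
-/

open Filter Topology
open scoped ContDiff

section Primitive

variable {E : Type*} [NormedAddCommGroup E] [NormedSpace ℝ E] [CompleteSpace E]
  {I : Set ℝ} {x₀ : ℝ} {a : ℝ → E}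

theorem hasDerivAt_intervalIntegral_of_continuousOn (hI : IsOpen I) (hIc : I.OrdConnected)
    (hx₀ : x₀ ∈ I) (ha : ContinuousOn a I) {x : ℝ} (hx : x ∈ I) :
    HasDerivAt (fun x => ∫ t in x₀..x, a t) (a x) x :=
  intervalIntegral.integral_hasDerivAt_right (ha.mono (hIc.uIcc_subset hx₀ hx)).intervalIntegrable
    (ha.stronglyMeasurableAtFilter hI x hx) (ha.continuousAt (hI.mem_nhds hx))

theorem contDiffOn_intervalIntegral_of_contDiffOn (hI : IsOpen I) (hIc : I.OrdConnected)
    (hx₀ : x₀ ∈ I) (ha : ContDiffOn ℝ ∞ a I) :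
    ContDiffOn ℝ ∞ (fun x => ∫ t in x₀..x, a t) I := by
  have hderiv {x} (hx : x ∈ I) :=
    hasDerivAt_intervalIntegral_of_continuousOn hI hIc hx₀ ha.continuousOn hx
  rw [contDiffOn_infty_iff_deriv_of_isOpen hI]
  exact ⟨fun x hx => (hderiv hx).differentiableAt.differentiableWithinAt,
    ha.congr fun x hx => (hderiv hx).deriv⟩

end Primitive

/-- The `x`-component of the flux `μ² ∇v / ω̃` of a graph with `v_y = 0`, `vₓ = s`. -/
noncomputable def flux (m l s : ℝ) : ℝ := m ^ 2 * s / √(1 - m ^ 2 * s ^ 2 / l ^ 2)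

noncomputable def slopeOfFlux (m l G : ℝ) : ℝ := G * l / (m * √(m ^ 2 * l ^ 2 + G ^ 2))

section Slope

variable {m l : ℝ} (G : ℝ)

theorem one_sub_sq_slopeOfFlux (hm : 0 < m) (hl : 0 < l) :
    1 - m ^ 2 * slopeOfFlux m l G ^ 2 / l ^ 2 = (m * l / √(m ^ 2 * l ^ 2 + G ^ 2)) ^ 2 := by
  have hS : 0 < m ^ 2 * l ^ 2 + G ^ 2 := by positivity
  unfold slopeOfFlux
  field_simp
  rw [Real.sq_sqrt hS.le]
  ring

theorem sq_mul_sq_slopeOfFlux_lt (hm : 0 < m) (hl : 0 < l) :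
    m ^ 2 * slopeOfFlux m l G ^ 2 < l ^ 2 := by
  have h := one_sub_sq_slopeOfFlux G hm hl
  have hpos : 0 < (m * l / √(m ^ 2 * l ^ 2 + G ^ 2)) ^ 2 := by positivity
  rw [← h, sub_pos, div_lt_one (by positivity)] at hpos
  exact hpos

theorem flux_slopeOfFlux (hm : 0 < m) (hl : 0 < l) : flux m l (slopeOfFlux m l G) = G := by
  rw [flux, one_sub_sq_slopeOfFlux G hm hl, Real.sqrt_sq (by positivity), slopeOfFlux]
  have : 0 < √(m ^ 2 * l ^ 2 + G ^ 2) := by positivity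
  field_simp

end Slope

theorem exists_contDiffOn_hasDerivAt_flux {I : Set ℝ} (hI : IsOpen I)
    (hIne : I.Nonempty) (hIc : I.OrdConnected) {m l a : ℝ → ℝ} (hm : ContDiffOn ℝ ∞ m I)
    (hl : ContDiffOn ℝ ∞ l I) (ha : ContDiffOn ℝ ∞ a I) (hm0 : ∀ x ∈ I, 0 < m x)
    (hl0 : ∀ x ∈ I, 0 < l x) :
    ∃ F : ℝ → ℝ, ContDiffOn ℝ ∞ F I ∧ ∀ x ∈ I,
      m x ^ 2 * deriv F x ^ 2 < l x ^ 2 ∧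
      HasDerivAt (fun t => flux (m t) (l t) (deriv F t)) (a x) x := by
  obtain ⟨x₀, hx₀⟩ := hIne
  set G := fun x => ∫ t in x₀..x, a t
  set s := fun x => slopeOfFlux (m x) (l x) (G x)
  have hG : ContDiffOn ℝ ∞ G I := contDiffOn_intervalIntegral_of_contDiffOn hI hIc hx₀ ha
  have hs : ContDiffOn ℝ ∞ s I := by
    have hS : ContDiffOn ℝ ∞ (fun x => m x ^ 2 * l x ^ 2 + G x ^ 2) I :=
      ((hm.pow 2).mul (hl.pow 2)).add (hG.pow 2)
    have hS0 : ∀ x ∈ I, 0 < m x ^ 2 * l x ^ 2 + G x ^ 2 := fun x hx => by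
      have := hm0 x hx; have := hl0 x hx; positivity
    exact (hG.mul hl).div (hm.mul (hS.sqrt fun x hx => (hS0 x hx).ne')) fun x hx =>
      (mul_pos (hm0 x hx) (Real.sqrt_pos.2 (hS0 x hx))).ne'
  set F := fun x => ∫ t in x₀..x, s t
  have hF {x} (hx : x ∈ I) : deriv F x = s x :=
    (hasDerivAt_intervalIntegral_of_continuousOn hI hIc hx₀ hs.continuousOn hx).deriv
  refine ⟨F, contDiffOn_intervalIntegral_of_contDiffOn hI hIc hx₀ hs, fun x hx => ?_⟩
  have hflux : (fun t => flux (m t) (l t) (deriv F t)) =ᶠ[𝓝 x] G :=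
    eventually_of_mem (hI.mem_nhds hx) fun t ht => (congrArg _ (hF ht)).trans
      (flux_slopeOfFlux _ (hm0 t ht) (hl0 t ht))
  refine ⟨hF hx ▸ sq_mul_sq_slopeOfFlux_lt _ (hm0 x hx) (hl0 x hx), ?_⟩
  exact (hasDerivAt_intervalIntegral_of_continuousOn hI hIc hx₀ ha.continuousOn hx)
    |>.congr_of_eventuallyEq hflux

theorem pdx_pdy_of_eventuallyEq_comp_fst {f : ℝ × ℝ → ℝ} {F : ℝ → ℝ} {c : ℝ} {p : ℝ × ℝ}
    (hf : f =ᶠ[𝓝 p] fun q => F q.1) (hF : HasDerivAt F c p.1) :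
    pdx f p = c ∧ pdy f p = 0 := by
  have h := (hF.hasFDerivAt.comp p hasFDerivAt_fst).congr_of_eventuallyEq hf
  simp [pdx, pdy, h.fderiv]

theorem pdx_flux_add_pdy_flux {μ lam v : ℝ × ℝ → ℝ} {m l F : ℝ → ℝ} {c : ℝ} {p : ℝ × ℝ}
    (hμ : ∀ q, μ q = m q.1) (hlam : ∀ q, lam q = l q.1)
    (hv : ∀ᶠ q in 𝓝 p, pdx v q = deriv F q.1 ∧ pdy v q = 0)
    (hflux : HasDerivAt (fun t => flux (m t) (l t) (deriv F t)) c p.1) :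
    pdx (fun q => μ q ^ 2 * pdx v q /
          Real.sqrt (1 - μ q ^ 2 * ((pdx v q) ^ 2 + (pdy v q) ^ 2) / lam q ^ 2)) p
        + pdy (fun q => μ q ^ 2 * pdy v q /
          Real.sqrt (1 - μ q ^ 2 * ((pdx v q) ^ 2 + (pdy v q) ^ 2) / lam q ^ 2)) p = c := by
  rw [(pdx_pdy_of_eventuallyEq_comp_fst ?_ hflux).1,
    (pdx_pdy_of_eventuallyEq_comp_fst (F := fun _ => 0) ?_ (hasDerivAt_const _ _)).2, add_zero]
  · exact hv.mono fun q hq => by simp [hq.2]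
  · exact hv.mono fun q hq => by simp [hq.1, hq.2, hμ, hlam, flux]

/-- A translationally invariant Lorentzian warped product `𝕃(M,0,μ)` over a strip
`I × ℝ` (with `λ`, `μ`, `H` depending only on the first coordinate) admits an entire
spacelike graph with prescribed mean curvature `H`. -/
theorem entire_spacelike_graph_translational
    (I : Set ℝ) (hI_open : IsOpen I) (hI_ne : I.Nonempty) (hI_conn : I.OrdConnected)
    (lam μ H : ℝ × ℝ → ℝ)
    (hlam : ContDiffOn ℝ (⊤ : ℕ∞) lam (I ×ˢ (Set.univ : Set ℝ)))
    (hμ : ContDiffOn ℝ (⊤ : ℕ∞) μ (I ×ˢ (Set.univ : Set ℝ)))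
    (hH : ContDiffOn ℝ (⊤ : ℕ∞) H (I ×ˢ (Set.univ : Set ℝ)))
    (hlampos : ∀ p ∈ I ×ˢ (Set.univ : Set ℝ), 0 < lam p)
    (hμpos : ∀ p ∈ I ×ˢ (Set.univ : Set ℝ), 0 < μ p)
    (hlamtr : ∀ p q : ℝ × ℝ, p.1 = q.1 → lam p = lam q)
    (hμtr : ∀ p q : ℝ × ℝ, p.1 = q.1 → μ p = μ q)
    (hHtr : ∀ p q : ℝ × ℝ, p.1 = q.1 → H p = H q) :
    ∃ v : ℝ × ℝ → ℝ, ContDiffOn ℝ (⊤ : ℕ∞) v (I ×ˢ (Set.univ : Set ℝ)) ∧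
      (∀ p ∈ I ×ˢ (Set.univ : Set ℝ),
        μ p ^ 2 * ((pdx v p) ^ 2 + (pdy v p) ^ 2) < lam p ^ 2) ∧
      (∀ p ∈ I ×ˢ (Set.univ : Set ℝ),
        pdx (fun q => μ q ^ 2 * pdx v q /
          Real.sqrt (1 - μ q ^ 2 * ((pdx v q) ^ 2 + (pdy v q) ^ 2) / lam q ^ 2)) p
        + pdy (fun q => μ q ^ 2 * pdy v q /
          Real.sqrt (1 - μ q ^ 2 * ((pdx v q) ^ 2 + (pdy v q) ^ 2) / lam q ^ 2)) p
        = 2 * H p * μ p * lam p ^ 2) := by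
  have hslice : Set.MapsTo (fun x : ℝ => (x, (0 : ℝ))) I (I ×ˢ Set.univ) :=
    fun x hx => ⟨hx, trivial⟩
  have hsmooth {f : ℝ × ℝ → ℝ} (hf : ContDiffOn ℝ ∞ f (I ×ˢ Set.univ)) :
      ContDiffOn ℝ ∞ (fun x => f (x, 0)) I :=
    hf.comp (contDiff_id.prodMk contDiff_const).contDiffOn hslice
  obtain ⟨F, hF, hF_solves⟩ := exists_contDiffOn_hasDerivAt_flux hI_open hI_ne hI_conn
    (hsmooth hμ) (hsmooth hlam)
    (((contDiffOn_const (c := 2).mul (hsmooth hH)).mul (hsmooth hμ)).mul ((hsmooth hlam).pow 2))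
    (fun x hx => hμpos _ (hslice hx)) (fun x hx => hlampos _ (hslice hx))
  have hΩ : IsOpen (I ×ˢ (Set.univ : Set ℝ)) := hI_open.prod isOpen_univ
  have hv {p} (hp : p ∈ I ×ˢ (Set.univ : Set ℝ)) :
      pdx (fun q => F q.1) p = deriv F p.1 ∧ pdy (fun q => F q.1) p = 0 :=
    pdx_pdy_of_eventuallyEq_comp_fst .rfl
      ((hF.differentiableOn (by simp)).differentiableAt (hI_open.mem_nhds hp.1)).hasDerivAt
  refine ⟨fun q => F q.1, hF.comp contDiff_fst.contDiffOn fun q hq => hq.1, fun p hp => ?_,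
    fun p hp => ?_⟩
  · rw [(hv hp).1, (hv hp).2, hμtr p (p.1, 0) rfl, hlamtr p (p.1, 0) rfl]
    simpa using (hF_solves p.1 hp.1).1
  · rw [hμtr p (p.1, 0) rfl, hlamtr p (p.1, 0) rfl, hHtr p (p.1, 0) rfl]
    exact pdx_flux_add_pdy_flux (fun q => hμtr q (q.1, 0) rfl) (fun q => hlamtr q (q.1, 0) rfl)
      (eventually_of_mem (hΩ.mem_nhds hp) fun q hq => hv hq) (hF_solves p.1 hp.1).2
end

section
/- Let ã, b̃ : ℝ² → ℝ be smooth functions with inf_{ℝ²} |∂ₓb̃ − ∂_y ã| > 0. Then there is no smooth function v : ℝ² → ℝ satisfying (vₓ − ã)² + (v_y − b̃)² < 1 at every point of ℝ². In other words, if the bundle curvature τ = −½(∂ₓb̃ − ∂_y ã) satisfies inf |τ| > 0, the Lorentzian Killing submersion 𝕃(ℝ², τ, 1) over the Euclidean plane admits no entire spacelike graph. -/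
open MeasureTheory Set intervalIntegral

section Slices

variable {F : ℝ × ℝ → ℝ}

lemma intervalIntegrable_slice_fst (hF : Continuous F) (y a b : ℝ) :
    IntervalIntegrable (fun x => F (x, y)) volume a b :=
  (hF.comp (.prodMk_left y)).intervalIntegrable a b

lemma intervalIntegrable_slice_snd (hF : Continuous F) (x a b : ℝ) :
    IntervalIntegrable (fun y => F (x, y)) volume a b :=
  (hF.comp (.prodMk_right x)).intervalIntegrable a b

lemma intervalIntegrable_integral_slice_fst (hF : Continuous F) (a b c d : ℝ) :
    IntervalIntegrable (fun y => ∫ x in a..b, F (x, y)) volume c d :=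
  (continuous_parametric_intervalIntegral_of_continuous' (f := fun y x => F (x, y))
    (hF.comp continuous_swap) a b).intervalIntegrable c d

end Slices

section PartialDerivatives

variable {f : ℝ × ℝ → ℝ}

lemma hasDerivAt_pdx {x y : ℝ} (hf : DifferentiableAt ℝ f (x, y)) :
    HasDerivAt (fun t => f (t, y)) (pdx f (x, y)) x :=
  hf.hasFDerivAt.comp_hasDerivAt x ((hasDerivAt_id x).prodMk (hasDerivAt_const x y))

lemma hasDerivAt_pdy {x y : ℝ} (hf : DifferentiableAt ℝ f (x, y)) :
    HasDerivAt (fun t => f (x, t)) (pdy f (x, y)) y :=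
  hf.hasFDerivAt.comp_hasDerivAt y ((hasDerivAt_const y x).prodMk (hasDerivAt_id y))

lemma continuous_pdx (hf : ContDiff ℝ 1 f) : Continuous (pdx f) :=
  (hf.continuous_fderiv one_ne_zero).clm_apply continuous_const

lemma continuous_pdy (hf : ContDiff ℝ 1 f) : Continuous (pdy f) :=
  (hf.continuous_fderiv one_ne_zero).clm_apply continuous_const

lemma integral_pdx (hf : ContDiff ℝ 1 f) (a b y : ℝ) :
    ∫ x in a..b, pdx f (x, y) = f (b, y) - f (a, y) :=
  integral_eq_sub_of_hasDerivAt (fun _ _ => hasDerivAt_pdx (hf.differentiable one_ne_zero _))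
    (intervalIntegrable_slice_fst (continuous_pdx hf) y a b)

lemma integral_pdy (hf : ContDiff ℝ 1 f) (x a b : ℝ) :
    ∫ y in a..b, pdy f (x, y) = f (x, b) - f (x, a) :=
  integral_eq_sub_of_hasDerivAt (fun _ _ => hasDerivAt_pdy (hf.differentiable one_ne_zero _))
    (intervalIntegrable_slice_snd (continuous_pdy hf) x a b)

end PartialDerivatives

/-- The circulation `∮ P dx + Q dy` around the positively oriented boundary of
`[x₀, x₁] × [y₀, y₁]`. -/
noncomputable def circulation (P Q : ℝ × ℝ → ℝ) (x₀ x₁ y₀ y₁ : ℝ) : ℝ :=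
  (∫ x in x₀..x₁, P (x, y₀)) + (∫ y in y₀..y₁, Q (x₁, y)) - (∫ x in x₀..x₁, P (x, y₁))
    - ∫ y in y₀..y₁, Q (x₀, y)

section Circulation

variable {P Q : ℝ × ℝ → ℝ} (x₀ x₁ y₀ y₁ : ℝ)

lemma circulation_pdx_pdy {v : ℝ × ℝ → ℝ} (hv : ContDiff ℝ 1 v) :
    circulation (pdx v) (pdy v) x₀ x₁ y₀ y₁ = 0 := by
  simp only [circulation, integral_pdx hv, integral_pdy hv]
  ring

lemma circulation_sub {P' Q' : ℝ × ℝ → ℝ} (hP : Continuous P) (hQ : Continuous Q)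
    (hP' : Continuous P') (hQ' : Continuous Q') :
    circulation (P - P') (Q - Q') x₀ x₁ y₀ y₁
      = circulation P Q x₀ x₁ y₀ y₁ - circulation P' Q' x₀ x₁ y₀ y₁ := by
  simp only [circulation, Pi.sub_apply,
    integral_sub (intervalIntegrable_slice_fst hP _ _ _) (intervalIntegrable_slice_fst hP' _ _ _),
    integral_sub (intervalIntegrable_slice_snd hQ _ _ _) (intervalIntegrable_slice_snd hQ' _ _ _)]
  ring

lemma abs_circulation_le {M : ℝ} (hP : ∀ p, |P p| ≤ M) (hQ : ∀ p, |Q p| ≤ M) :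
    |circulation P Q x₀ x₁ y₀ y₁| ≤ 2 * M * (|x₁ - x₀| + |y₁ - y₀|) := by
  have hx : ∀ y, ‖∫ x in x₀..x₁, P (x, y)‖ ≤ M * |x₁ - x₀| :=
    fun y => norm_integral_le_of_norm_le_const fun x _ => hP (x, y)
  have hy : ∀ x, ‖∫ y in y₀..y₁, Q (x, y)‖ ≤ M * |y₁ - y₀| :=
    fun x => norm_integral_le_of_norm_le_const fun y _ => hQ (x, y)
  have h₁ := hx y₀; have h₂ := hy x₁; have h₃ := hx y₁; have h₄ := hy x₀
  simp only [Real.norm_eq_abs, abs_le] at h₁ h₂ h₃ h₄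
  rw [circulation, abs_le]
  constructor <;> linarith

end Circulation

section DoubleIntegral

variable {x₀ x₁ y₀ y₁ : ℝ}

theorem integral_integral_curl_eq_circulation {P Q : ℝ × ℝ → ℝ}
    (hP : ContDiff ℝ 1 P) (hQ : ContDiff ℝ 1 Q) :
    ∫ y in y₀..y₁, ∫ x in x₀..x₁, (pdx Q (x, y) - pdy P (x, y))
      = circulation P Q x₀ x₁ y₀ y₁ := by
  have hPy := continuous_pdy hP
  have hQx := continuous_pdx hQ
  have hinner : ∀ y, ∫ x in x₀..x₁, (pdx Q (x, y) - pdy P (x, y))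
      = (Q (x₁, y) - Q (x₀, y)) - ∫ x in x₀..x₁, pdy P (x, y) := fun y => by
    rw [integral_sub (intervalIntegrable_slice_fst hQx y _ _)
      (intervalIntegrable_slice_fst hPy y _ _), integral_pdx hQ]
  have hswap : ∫ y in y₀..y₁, ∫ x in x₀..x₁, pdy P (x, y)
      = ∫ x in x₀..x₁, ∫ y in y₀..y₁, pdy P (x, y) :=
    (intervalIntegral_intervalIntegral_swap (F := fun x y => pdy P (x, y))
      ((hPy.continuousOn.integrableOn_compact
        (isCompact_uIcc.prod isCompact_uIcc)).mono_set
          (prod_mono uIoc_subset_uIcc uIoc_subset_uIcc))).symm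
  have hQr := intervalIntegrable_slice_snd hQ.continuous x₁ y₀ y₁
  have hQl := intervalIntegrable_slice_snd hQ.continuous x₀ y₀ y₁
  have hPt := intervalIntegrable_slice_fst hP.continuous y₁ x₀ x₁
  have hPb := intervalIntegrable_slice_fst hP.continuous y₀ x₀ x₁
  simp only [integral_congr fun y _ => hinner y]
  rw [integral_sub (hQr.sub hQl) (intervalIntegrable_integral_slice_fst hPy _ _ _ _), hswap,
    integral_congr fun x _ => integral_pdy hP x y₀ y₁, integral_sub hQr hQl,
    integral_sub hPt hPb, circulation]
  ring

lemma mul_area_le_integral_integral {F : ℝ × ℝ → ℝ} {c : ℝ} (hF : Continuous F)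
    (hx : x₀ ≤ x₁) (hy : y₀ ≤ y₁) (h : ∀ x ∈ Icc x₀ x₁, ∀ y ∈ Icc y₀ y₁, c ≤ F (x, y)) :
    c * ((x₁ - x₀) * (y₁ - y₀)) ≤ ∫ y in y₀..y₁, ∫ x in x₀..x₁, F (x, y) := by
  have hinner : ∀ y ∈ Icc y₀ y₁, c * (x₁ - x₀) ≤ ∫ x in x₀..x₁, F (x, y) := fun y hy' => by
    have := integral_mono_on hx intervalIntegrable_const
      (intervalIntegrable_slice_fst hF y _ _) fun x hx' => h x hx' y hy'
    rwa [intervalIntegral.integral_const, smul_eq_mul, mul_comm] at this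
  calc c * ((x₁ - x₀) * (y₁ - y₀))
      = ∫ _ in y₀..y₁, c * (x₁ - x₀) := by rw [intervalIntegral.integral_const, smul_eq_mul]; ring
    _ ≤ _ := integral_mono_on hy intervalIntegrable_const
      (intervalIntegrable_integral_slice_fst hF _ _ _ _) hinner

lemma mul_area_le_abs_integral_integral {F : ℝ × ℝ → ℝ} {c : ℝ} (hF : Continuous F)
    (hc : 0 < c) (hx : x₀ ≤ x₁) (hy : y₀ ≤ y₁)
    (h : ∀ x ∈ Icc x₀ x₁, ∀ y ∈ Icc y₀ y₁, c ≤ |F (x, y)|) :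
    c * ((x₁ - x₀) * (y₁ - y₀)) ≤ |∫ y in y₀..y₁, ∫ x in x₀..x₁, F (x, y)| := by
  have hS : IsPreconnected (Icc x₀ x₁ ×ˢ Icc y₀ y₁) := isPreconnected_Icc.prod isPreconnected_Icc
  rcases hS.eq_or_eq_neg_of_sq_eq hF.continuousOn hF.abs.continuousOn
    (fun p _ => by simp only [Pi.pow_apply, sq_abs])
    (fun {p} hp => (hc.trans_le (h _ hp.1 _ hp.2)).ne')
    with hpos | hneg
  · refine (mul_area_le_integral_integral hF hx hy fun x hx' y hy' => ?_).trans (le_abs_self _)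
    rw [hpos ⟨hx', hy'⟩]
    exact h x hx' y hy'
  · refine (mul_area_le_integral_integral hF.neg hx hy fun x hx' y hy' => ?_).trans ?_
    · rw [Pi.neg_apply, hneg ⟨hx', hy'⟩, Pi.neg_apply, neg_neg]
      exact h x hx' y hy'
    · simp only [Pi.neg_apply, intervalIntegral.integral_neg]
      exact neg_le_abs _

end DoubleIntegral

/-- If the bundle curvature `τ = -½(∂ₓb̃ - ∂_yã)` satisfies `inf |τ| > 0`, the Lorentzian
Killing submersion `𝕃(ℝ², τ, 1)` over the Euclidean plane admits no entire spacelike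
graph. -/
theorem no_entire_spacelike_graph_inf_tau_positive
    (ta tb : ℝ × ℝ → ℝ)
    (hta : ContDiff ℝ (⊤ : ℕ∞) ta) (htb : ContDiff ℝ (⊤ : ℕ∞) tb)
    (hinf : ∃ c : ℝ, 0 < c ∧ ∀ p : ℝ × ℝ,
      c ≤ |pdx tb p - pdy ta p|) :
    ¬ ∃ v : ℝ × ℝ → ℝ, ContDiff ℝ (⊤ : ℕ∞) v ∧
      ∀ p : ℝ × ℝ, (pdx v p - ta p) ^ 2 + (pdy v p - tb p) ^ 2 < 1 := by
  rintro ⟨v, hv, hspacelike⟩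
  obtain ⟨c, hc, hcurv⟩ := hinf
  have hta₁ : ContDiff ℝ 1 ta := hta.of_le (by exact_mod_cast le_top)
  have htb₁ : ContDiff ℝ 1 tb := htb.of_le (by exact_mod_cast le_top)
  have hv₁ : ContDiff ℝ 1 v := hv.of_le (by exact_mod_cast le_top)
  have hP : ∀ p, |(ta - pdx v) p| ≤ 1 := fun p => by
    rw [Pi.sub_apply, ← sq_le_one_iff_abs_le_one]
    nlinarith [hspacelike p, sq_nonneg (pdy v p - tb p)]
  have hQ : ∀ p, |(tb - pdy v) p| ≤ 1 := fun p => by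
    rw [Pi.sub_apply, ← sq_le_one_iff_abs_le_one]
    nlinarith [hspacelike p, sq_nonneg (pdx v p - ta p)]
  -- the area term `c L² = 5 L` of the curl integral beats the perimeter bound `4 L`
  set L := 5 / c with hL_def
  have hL : 0 < L := by positivity
  have hupper := abs_circulation_le 0 L 0 L hP hQ
  rw [circulation_sub _ _ _ _ hta.continuous htb.continuous (continuous_pdx hv₁)
    (continuous_pdy hv₁), circulation_pdx_pdy _ _ _ _ hv₁, sub_zero,
    ← integral_integral_curl_eq_circulation hta₁ htb₁] at hupper
  have hlower := mul_area_le_abs_integral_integral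
    ((continuous_pdx htb₁).sub (continuous_pdy hta₁)) hc hL.le hL.le fun x _ y _ => hcurv (x, y)
  have harea : c * (L * L) = 5 * L := by rw [← mul_assoc, hL_def, mul_div_cancel₀ _ hc.ne']
  simp only [Pi.sub_apply, sub_zero, abs_of_pos hL] at hupper hlower
  linarith
end

section
/- Let R ∈ (0, +∞], let Ω ⊆ ℝ² be the open disk of radius R centered at the origin, let λ, μ : [0,R) → ℝ be smooth positive radial profiles (defining λ(x,y) = λ(√(x²+y²)) and μ(x,y) = μ(√(x²+y²)) on Ω), let H ≥ 0 be a constant, and set c(ρ) = ρ⁻²∫₀^ρ s·λ(s)²·μ(s) ds for ρ ∈ (0,R). If there exists ρ₀ ∈ (0,R) with 2Hρ₀·c(ρ₀) > λ(ρ₀)·μ(ρ₀), then there is no smooth function u : Ω → ℝ satisfying ∂ₓ(μ²uₓ/ω) + ∂_y(μ²u_y/ω) = 2Hμλ² on Ω, where ω = √(1 + μ²(uₓ² + u_y²)/λ²); that is, 𝔼(M,0,μ) admits no entire graph of constant mean curvature H when H exceeds half the Cheeger constant of M with density μ. -/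
/-- The rotationally invariant function on the plane induced by a radial profile. -/
noncomputable def radialLift (f : ℝ → ℝ) (p : ℝ × ℝ) : ℝ :=
  f (Real.sqrt (p.1 ^ 2 + p.2 ^ 2))

/-- `c(ρ) = ρ⁻² ∫₀^ρ s·λ(s)²·μ(s) ds`. -/
noncomputable def cProfile (lam mu : ℝ → ℝ) (ρ : ℝ) : ℝ :=
  (ρ ^ 2)⁻¹ * ∫ s in (0:ℝ)..ρ, s * lam s ^ 2 * mu s

/-!
The PDE says that the vector field `F = μ² ∇u / ω` has divergence `2Hμλ²`, while
`ω² = 1 + μ²|∇u|²/λ²` forces `|F| < λμ` pointwise. Integrating the divergence over the annulus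
`ε ≤ r ≤ ρ₀` (in polar coordinates, away from the origin where the radial lifts need not be smooth)
gives `4πH ∫_ε^ρ₀ sλ²μ ds ≤ 2πρ₀λ(ρ₀)μ(ρ₀) + 2πελ(ε)μ(ε)`, and letting `ε → 0` yields
`2Hρ₀c(ρ₀) ≤ λ(ρ₀)μ(ρ₀)`.
-/

open Real Set MeasureTheory Filter Topology
open scoped Interval

theorem ContinuousLinearMap.apply_prod_eq {E : Type*} [NormedAddCommGroup E] [NormedSpace ℝ E]
    (L : ℝ × ℝ →L[ℝ] E) (a b : ℝ) : L (a, b) = a • L (1, 0) + b • L (0, 1) := by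
  rw [← map_smul, ← map_smul, ← map_add, Prod.smul_mk, Prod.smul_mk, Prod.mk_add_mk]
  simp

section PolarFlux

variable (F₁ F₂ : ℝ × ℝ → ℝ)

/- In polar coordinates `z = (r, θ)`, `radialFlux` is `r` times the outward normal component of
`F = (F₁, F₂)` on the circle of radius `r` and `angularFlux` is its tangential component, so that
the divergence theorem on the rectangle `[r₁, r₂] × [0, 2π]` becomes the one on an annulus. -/
noncomputable def radialFlux (z : ℝ × ℝ) : ℝ :=
  z.1 * (cos z.2 * F₁ (polarCoord.symm z) + sin z.2 * F₂ (polarCoord.symm z))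

noncomputable def angularFlux (z : ℝ × ℝ) : ℝ :=
  -sin z.2 * F₁ (polarCoord.symm z) + cos z.2 * F₂ (polarCoord.symm z)

variable {F₁ F₂}

theorem fderiv_radialFlux_add_fderiv_angularFlux {z : ℝ × ℝ}
    (h₁ : DifferentiableAt ℝ F₁ (polarCoord.symm z))
    (h₂ : DifferentiableAt ℝ F₂ (polarCoord.symm z)) :
    fderiv ℝ (radialFlux F₁ F₂) z (1, 0) + fderiv ℝ (angularFlux F₁ F₂) z (0, 1)
      = z.1 * (pdx F₁ (polarCoord.symm z) + pdy F₂ (polarCoord.symm z)) := by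
  have hG₁ := h₁.hasFDerivAt.comp z (hasFDerivAt_polarCoord_symm z)
  have hG₂ := h₂.hasFDerivAt.comp z (hasFDerivAt_polarCoord_symm z)
  have hsnd := hasFDerivAt_snd (𝕜 := ℝ) (E := ℝ) (F := ℝ) (p := z)
  have hc := (hasDerivAt_cos z.2).comp_hasFDerivAt z hsnd
  have hs := (hasDerivAt_sin z.2).comp_hasFDerivAt z hsnd
  have hP : HasFDerivAt (radialFlux F₁ F₂) _ z :=
    (hasFDerivAt_fst (𝕜 := ℝ) (E := ℝ) (F := ℝ)).mul ((hc.mul hG₁).add (hs.mul hG₂))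
  have hQ : HasFDerivAt (angularFlux F₁ F₂) _ z := (hs.neg.mul hG₁).add (hc.mul hG₂)
  rw [hP.fderiv, hQ.fderiv]
  simp only [Function.comp_apply, fderivPolarCoordSymm, neg_mul, neg_smul, smul_neg, smul_add,
    add_apply, smul_apply,
    ContinuousLinearMap.comp_apply, LinearMap.coe_toContinuousLinearMap',
    Matrix.toLin_finTwoProd_apply, mul_one, mul_zero, add_zero, zero_add, smul_eq_mul,
    neg_apply, ContinuousLinearMap.coe_snd', ContinuousLinearMap.coe_fst',
    neg_zero, Pi.neg_apply, pdx, pdy,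
    ContinuousLinearMap.apply_prod_eq _ (cos z.2) (sin z.2),
    ContinuousLinearMap.apply_prod_eq _ (-(z.1 * sin z.2)) (z.1 * cos z.2)]
  linear_combination z.1 * (fderiv ℝ F₁ (polarCoord.symm z) (1, 0) +
    fderiv ℝ F₂ (polarCoord.symm z) (0, 1)) * sin_sq_add_cos_sq z.2

theorem differentiableAt_radialFlux {z : ℝ × ℝ}
    (h₁ : DifferentiableAt ℝ F₁ (polarCoord.symm z))
    (h₂ : DifferentiableAt ℝ F₂ (polarCoord.symm z)) :
    DifferentiableAt ℝ (radialFlux F₁ F₂) z := by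
  have := (hasFDerivAt_polarCoord_symm z).differentiableAt
  unfold radialFlux
  fun_prop

theorem differentiableAt_angularFlux {z : ℝ × ℝ}
    (h₁ : DifferentiableAt ℝ F₁ (polarCoord.symm z))
    (h₂ : DifferentiableAt ℝ F₂ (polarCoord.symm z)) :
    DifferentiableAt ℝ (angularFlux F₁ F₂) z := by
  have := (hasFDerivAt_polarCoord_symm z).differentiableAt
  unfold angularFlux
  fun_prop

theorem angularFlux_two_pi (r : ℝ) :
    angularFlux F₁ F₂ (r, 2 * π) = angularFlux F₁ F₂ (r, 0) := by
  simp [angularFlux]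

theorem integral_radialFlux_sub_integral_radialFlux {r₁ r₂ : ℝ} {g : ℝ → ℝ}
    (hF : ∀ r ∈ [[r₁, r₂]], ∀ θ, DifferentiableAt ℝ F₁ (polarCoord.symm (r, θ)) ∧
      DifferentiableAt ℝ F₂ (polarCoord.symm (r, θ)))
    (hdiv : ∀ r ∈ [[r₁, r₂]], ∀ θ,
      pdx F₁ (polarCoord.symm (r, θ)) + pdy F₂ (polarCoord.symm (r, θ)) = g r)
    (hg : ContinuousOn g [[r₁, r₂]]) :
    (∫ θ in 0..2 * π, radialFlux F₁ F₂ (r₂, θ)) - (∫ θ in 0..2 * π, radialFlux F₁ F₂ (r₁, θ))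
      = 2 * π * ∫ r in r₁..r₂, r * g r := by
  set R := [[r₁, r₂]] ×ˢ [[0, 2 * π]]
  have hF' (z : ℝ × ℝ) (hz : z ∈ R) : DifferentiableAt ℝ F₁ (polarCoord.symm z) ∧
      DifferentiableAt ℝ F₂ (polarCoord.symm z) := hF z.1 hz.1 z.2
  have hP (z) (hz : z ∈ R) := differentiableAt_radialFlux (hF' z hz).1 (hF' z hz).2
  have hQ (z) (hz : z ∈ R) := differentiableAt_angularFlux (hF' z hz).1 (hF' z hz).2
  have hdiv' : EqOn
      (fun z => fderiv ℝ (radialFlux F₁ F₂) z (1, 0) + fderiv ℝ (angularFlux F₁ F₂) z (0, 1))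
      (fun z => z.1 * g z.1) R := fun z hz =>
    (fderiv_radialFlux_add_fderiv_angularFlux (hF' z hz).1 (hF' z hz).2).trans
      (congrArg (z.1 * ·) (hdiv z.1 hz.1 z.2))
  have hint : IntegrableOn (fun z : ℝ × ℝ => z.1 * g z.1) R :=
    (continuousOn_fst.mul (hg.comp continuousOn_fst fun z hz => hz.1)).integrableOn_compact
      (isCompact_uIcc.prod isCompact_uIcc)
  have hinner : ∀ r ∈ [[r₁, r₂]], (∫ θ in 0..2 * π,
      fderiv ℝ (radialFlux F₁ F₂) (r, θ) (1, 0) + fderiv ℝ (angularFlux F₁ F₂) (r, θ) (0, 1))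
        = 2 * π * (r * g r) := fun r hr => by
    rw [intervalIntegral.integral_congr fun θ hθ => hdiv' ⟨hr, hθ⟩]
    simp only [intervalIntegral.integral_const, sub_zero, smul_eq_mul]
  have hrect := integral2_divergence_prod_of_hasFDerivAt
    (radialFlux F₁ F₂) (angularFlux F₁ F₂) (fderiv ℝ (radialFlux F₁ F₂))
    (fderiv ℝ (angularFlux F₁ F₂)) r₁ 0 r₂ (2 * π)
    (fun z hz => (hP z hz).continuousAt.continuousWithinAt)
    (fun z hz => (hQ z hz).continuousAt.continuousWithinAt)
    (fun z hz => (hP z ⟨Ioo_subset_Icc_self hz.1, Ioo_subset_Icc_self hz.2⟩).hasFDerivAt)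
    (fun z hz => (hQ z ⟨Ioo_subset_Icc_self hz.1, Ioo_subset_Icc_self hz.2⟩).hasFDerivAt)
    (hint.congr_fun hdiv'.symm (measurableSet_uIcc.prod measurableSet_uIcc))
  simp only [intervalIntegral.integral_congr hinner, intervalIntegral.integral_const_mul,
    angularFlux_two_pi, sub_self, zero_add] at hrect
  linarith

theorem abs_integral_radialFlux_le {r C : ℝ} (hr : 0 ≤ r)
    (hF : ∀ θ, |cos θ * F₁ (polarCoord.symm (r, θ)) + sin θ * F₂ (polarCoord.symm (r, θ))| ≤ C) :
    |∫ θ in 0..2 * π, radialFlux F₁ F₂ (r, θ)| ≤ 2 * π * (r * C) := by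
  have h := intervalIntegral.norm_integral_le_of_norm_le_const (a := 0) (b := 2 * π)
    (f := fun θ => radialFlux F₁ F₂ (r, θ)) (C := r * C) fun θ _ => by
      rw [Real.norm_eq_abs, radialFlux, abs_mul, abs_of_nonneg hr]
      exact mul_le_mul_of_nonneg_left (hF θ) hr
  rw [Real.norm_eq_abs, sub_zero, abs_of_pos two_pi_pos] at h
  exact h.trans_eq (by ring)

theorem integral_mul_le_of_abs_flux_le {ρ : ℝ} {g Φ : ℝ → ℝ} (hρ : 0 < ρ)
    (hF : ∀ r ∈ Ioc 0 ρ, ∀ θ, DifferentiableAt ℝ F₁ (polarCoord.symm (r, θ)) ∧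
      DifferentiableAt ℝ F₂ (polarCoord.symm (r, θ)))
    (hdiv : ∀ r ∈ Ioc 0 ρ, ∀ θ,
      pdx F₁ (polarCoord.symm (r, θ)) + pdy F₂ (polarCoord.symm (r, θ)) = g r)
    (hflux : ∀ r ∈ Ioc 0 ρ, ∀ θ,
      |cos θ * F₁ (polarCoord.symm (r, θ)) + sin θ * F₂ (polarCoord.symm (r, θ))| ≤ Φ r)
    (hg : ContinuousOn g (Icc 0 ρ)) (hΦ : ContinuousOn Φ (Icc 0 ρ)) :
    ∫ r in 0..ρ, r * g r ≤ ρ * Φ ρ := by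
  have hannulus : ∀ ε ∈ Ioc 0 ρ, (∫ r in ε..ρ, r * g r) - ε * Φ ε ≤ ρ * Φ ρ := by
    intro ε hε
    have hsub : [[ε, ρ]] ⊆ Ioc 0 ρ := by
      rw [uIcc_of_le hε.2]
      exact fun r hr => ⟨hε.1.trans_le hr.1, hr.2⟩
    have hstokes := integral_radialFlux_sub_integral_radialFlux (fun r hr => hF r (hsub hr))
      (fun r hr => hdiv r (hsub hr)) (hg.mono (hsub.trans Ioc_subset_Icc_self))
    have hρflux := abs_integral_radialFlux_le hρ.le (hflux ρ (right_mem_Ioc.2 hρ))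
    have hεflux := abs_integral_radialFlux_le hε.1.le (hflux ε hε)
    have h2π : 2 * π * ((∫ r in ε..ρ, r * g r) - ε * Φ ε) ≤ 2 * π * (ρ * Φ ρ) := by
      linarith [(abs_le.1 hρflux).2, (abs_le.1 hεflux).1]
    exact le_of_mul_le_mul_left h2π two_pi_pos
  have hcont : ContinuousOn (fun ε => (∫ r in ε..ρ, r * g r) - ε * Φ ε) (Icc 0 ρ) := by
    refine ContinuousOn.sub ?_ (continuousOn_id.mul hΦ)
    rw [← uIcc_of_le hρ.le] at hg ⊢
    exact intervalIntegral.continuousOn_primitive_interval_left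
      ((continuousOn_id.mul hg).integrableOn_compact isCompact_uIcc)
  have h0 := ContinuousWithinAt.closure_le (closure_Ioc hρ.ne ▸ left_mem_Icc.2 hρ.le)
    ((hcont 0 (left_mem_Icc.2 hρ.le)).mono Ioc_subset_Icc_self) continuousWithinAt_const hannulus
  simpa using h0

end PolarFlux

section MeanCurvatureField

variable {Λ M u : ℝ × ℝ → ℝ} {q : ℝ × ℝ}

/- `graphWeight` is the paper's `ω`, and `meanCurvatureField Λ M u v` is the component along `v`
of `M² ∇u / ω`, whose divergence is `2HMΛ²` for a graph of mean curvature `H`. -/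
noncomputable def graphWeight (Λ M u : ℝ × ℝ → ℝ) (q : ℝ × ℝ) : ℝ :=
  √(1 + M q ^ 2 * (pdx u q ^ 2 + pdy u q ^ 2) / Λ q ^ 2)

noncomputable def meanCurvatureField (Λ M u : ℝ × ℝ → ℝ) (v q : ℝ × ℝ) : ℝ :=
  M q ^ 2 * fderiv ℝ u q v / graphWeight Λ M u q

theorem one_le_graphWeight : 1 ≤ graphWeight Λ M u q :=
  one_le_sqrt.2 (le_add_of_nonneg_right (by positivity))

theorem abs_meanCurvatureField_le {a b : ℝ} (hΛ : 0 < Λ q) (hM : 0 ≤ M q)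
    (hab : a ^ 2 + b ^ 2 = 1) :
    |a * meanCurvatureField Λ M u (1, 0) q + b * meanCurvatureField Λ M u (0, 1) q|
      ≤ Λ q * M q := by
  have hω2 : graphWeight Λ M u q ^ 2 = 1 + M q ^ 2 * (pdx u q ^ 2 + pdy u q ^ 2) / Λ q ^ 2 :=
    sq_sqrt (by positivity)
  have hω : 1 ≤ graphWeight Λ M u q := one_le_graphWeight
  have hCS : (a * pdx u q + b * pdy u q) ^ 2 ≤ pdx u q ^ 2 + pdy u q ^ 2 := by
    nlinarith [sq_nonneg (a * pdy u q - b * pdx u q)]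
  have hcomb : a * meanCurvatureField Λ M u (1, 0) q + b * meanCurvatureField Λ M u (0, 1) q
      = M q ^ 2 * (a * pdx u q + b * pdy u q) / graphWeight Λ M u q := by
    simp only [meanCurvatureField, pdx, pdy]
    ring
  rw [hcomb]
  refine abs_le_of_sq_le_sq ?_ (by positivity)
  rw [div_pow, div_le_iff₀ (by positivity), hω2]
  field_simp
  nlinarith [mul_le_mul_of_nonneg_left hCS (by positivity : 0 ≤ M q ^ 4), sq_nonneg (M q * Λ q)]

theorem differentiableAt_meanCurvatureField (hΛ : DifferentiableAt ℝ Λ q)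
    (hM : DifferentiableAt ℝ M q) (hu : ContDiffAt ℝ 2 u q) (hΛ0 : Λ q ≠ 0) (v : ℝ × ℝ) :
    DifferentiableAt ℝ (meanCurvatureField Λ M u v) q := by
  have hDu : ∀ w, DifferentiableAt ℝ (fun q => fderiv ℝ u q w) q := fun w =>
    ((hu.fderiv_right (m := 1) (by norm_num)).differentiableAt (by norm_num)).clm_apply
      (differentiableAt_const w)
  have hω : DifferentiableAt ℝ (graphWeight Λ M u) q :=
    DifferentiableAt.sqrt (by unfold pdx pdy; fun_prop (disch := exact pow_ne_zero 2 hΛ0))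
      (add_pos_of_pos_of_nonneg one_pos (by positivity)).ne'
  unfold meanCurvatureField
  fun_prop (disch := exact (one_pos.trans_le one_le_graphWeight).ne')

end MeanCurvatureField

section RadialLift

theorem polarCoord_symm_fst_sq_add_snd_sq (z : ℝ × ℝ) :
    (polarCoord.symm z).1 ^ 2 + (polarCoord.symm z).2 ^ 2 = z.1 ^ 2 := by
  simp only [polarCoord_symm_apply]
  linear_combination z.1 ^ 2 * sin_sq_add_cos_sq z.2

theorem radialLift_polarCoord_symm (f : ℝ → ℝ) {r : ℝ} (hr : 0 ≤ r) (θ : ℝ) :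
    radialLift f (polarCoord.symm (r, θ)) = f r := by
  rw [radialLift, polarCoord_symm_fst_sq_add_snd_sq, sqrt_sq hr]

theorem differentiableAt_radialLift {f : ℝ → ℝ} {p : ℝ × ℝ}
    (hf : DifferentiableAt ℝ f √(p.1 ^ 2 + p.2 ^ 2)) (hp : p.1 ^ 2 + p.2 ^ 2 ≠ 0) :
    DifferentiableAt ℝ (radialLift f) p :=
  hf.comp p (by fun_prop (disch := exact hp))

theorem setOf_sqrt_mem_mem_nhds_polarCoord_symm {S : Set ℝ} {r : ℝ} (hS : S ∈ 𝓝 r)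
    (hr : 0 ≤ r) (θ : ℝ) :
    {p : ℝ × ℝ | √(p.1 ^ 2 + p.2 ^ 2) ∈ S} ∈ 𝓝 (polarCoord.symm (r, θ)) := by
  refine ContinuousAt.preimage_mem_nhds (by fun_prop) ?_
  rwa [polarCoord_symm_fst_sq_add_snd_sq, sqrt_sq hr]

variable {lam mu : ℝ → ℝ} {u : ℝ × ℝ → ℝ} {r : ℝ}

theorem differentiableAt_meanCurvatureField_radialLift (hr : 0 < r)
    (hlam : DifferentiableAt ℝ lam r) (hmu : DifferentiableAt ℝ mu r) (hlam0 : lam r ≠ 0)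
    {θ : ℝ} (hu : ContDiffAt ℝ 2 u (polarCoord.symm (r, θ))) (v : ℝ × ℝ) :
    DifferentiableAt ℝ (meanCurvatureField (radialLift lam) (radialLift mu) u v)
      (polarCoord.symm (r, θ)) := by
  have hsq := polarCoord_symm_fst_sq_add_snd_sq (r, θ)
  have hp : (polarCoord.symm (r, θ)).1 ^ 2 + (polarCoord.symm (r, θ)).2 ^ 2 ≠ 0 :=
    hsq ▸ pow_ne_zero 2 hr.ne'
  have hsqrt : √((polarCoord.symm (r, θ)).1 ^ 2 + (polarCoord.symm (r, θ)).2 ^ 2) = r := by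
    rw [hsq, sqrt_sq hr.le]
  refine differentiableAt_meanCurvatureField (differentiableAt_radialLift (by rwa [hsqrt]) hp)
    (differentiableAt_radialLift (by rwa [hsqrt]) hp) hu ?_ v
  rwa [radialLift_polarCoord_symm _ hr.le]

theorem abs_meanCurvatureField_radialLift_le (hr : 0 ≤ r) (hlam : 0 < lam r) (hmu : 0 ≤ mu r)
    (θ : ℝ) :
    |cos θ * meanCurvatureField (radialLift lam) (radialLift mu) u (1, 0) (polarCoord.symm (r, θ))
      + sin θ * meanCurvatureField (radialLift lam) (radialLift mu) u (0, 1)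
        (polarCoord.symm (r, θ))| ≤ lam r * mu r := by
  have h := abs_meanCurvatureField_le (u := u) (q := polarCoord.symm (r, θ))
    (Λ := radialLift lam) (M := radialLift mu)
    (by rwa [radialLift_polarCoord_symm _ hr]) (by rwa [radialLift_polarCoord_symm _ hr])
    (cos_sq_add_sin_sq θ)
  rwa [radialLift_polarCoord_symm _ hr, radialLift_polarCoord_symm _ hr] at h

end RadialLift

theorem Icc_subset_of_mem {S : Set ℝ} (hS : S = Ici 0 ∨ ∃ R, S = Ico 0 R) {ρ : ℝ}
    (hρ : ρ ∈ S) : Icc 0 ρ ⊆ S := by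
  rcases hS with rfl | ⟨R, rfl⟩
  · exact fun r hr => hr.1
  · exact fun r hr => ⟨hr.1, hr.2.trans_lt hρ.2⟩

theorem Ioc_subset_interior_of_mem {S : Set ℝ} (hS : S = Ici 0 ∨ ∃ R, S = Ico 0 R) {ρ : ℝ}
    (hρ : ρ ∈ S) : Ioc 0 ρ ⊆ interior S := by
  rcases hS with rfl | ⟨R, rfl⟩
  · rw [interior_Ici]
    exact fun r hr => hr.1
  · rw [interior_Ico]
    exact fun r hr => ⟨hr.1, hr.2.trans_lt hρ.2⟩

theorem sq_mul_cProfile (lam mu : ℝ → ℝ) {ρ : ℝ} (hρ : ρ ≠ 0) :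
    ρ ^ 2 * cProfile lam mu ρ = ∫ s in 0..ρ, s * lam s ^ 2 * mu s := by
  rw [cProfile, ← mul_assoc, mul_inv_cancel₀ (pow_ne_zero 2 hρ), one_mul]

theorem no_entire_rotational_H_graph_general
    (S : Set ℝ) (hS : S = Set.Ici 0 ∨ ∃ R : ℝ, 0 < R ∧ S = Set.Ico 0 R)
    (lam mu : ℝ → ℝ)
    (hlam : ContDiffOn ℝ (⊤ : ℕ∞) lam S) (hmu : ContDiffOn ℝ (⊤ : ℕ∞) mu S)
    (hlampos : ∀ r ∈ S, 0 < lam r) (hmupos : ∀ r ∈ S, 0 < mu r)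
    (H : ℝ)
    (hfail : ∃ ρ₀ ∈ S, 0 < ρ₀ ∧ lam ρ₀ * mu ρ₀ < 2 * H * ρ₀ * cProfile lam mu ρ₀) :
    ¬ ∃ u : ℝ × ℝ → ℝ,
      ContDiffOn ℝ (⊤ : ℕ∞) u {p : ℝ × ℝ | Real.sqrt (p.1 ^ 2 + p.2 ^ 2) ∈ S} ∧
      (∀ p ∈ {p : ℝ × ℝ | Real.sqrt (p.1 ^ 2 + p.2 ^ 2) ∈ S},
        pdx (fun q => radialLift mu q ^ 2 * pdx u q /
          Real.sqrt (1 + radialLift mu q ^ 2 * ((pdx u q) ^ 2 + (pdy u q) ^ 2) /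
            radialLift lam q ^ 2)) p
        + pdy (fun q => radialLift mu q ^ 2 * pdy u q /
          Real.sqrt (1 + radialLift mu q ^ 2 * ((pdx u q) ^ 2 + (pdy u q) ^ 2) /
            radialLift lam q ^ 2)) p
        = 2 * H * radialLift mu p * radialLift lam p ^ 2) := by
  rintro ⟨u, hu, hpde⟩
  obtain ⟨ρ₀, hρ₀S, hρ₀, hlt⟩ := hfail
  have hS' : S = Ici 0 ∨ ∃ R, S = Ico 0 R := hS.imp_right fun ⟨R, _, h⟩ => ⟨R, h⟩
  have hIcc := Icc_subset_of_mem hS' hρ₀S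
  have hIoc r (hr : r ∈ Ioc 0 ρ₀) : r ∈ S := hIcc (Ioc_subset_Icc_self hr)
  have hSr r (hr : r ∈ Ioc 0 ρ₀) : S ∈ 𝓝 r :=
    mem_interior_iff_mem_nhds.1 (Ioc_subset_interior_of_mem hS' hρ₀S hr)
  have hU r (hr : r ∈ Ioc 0 ρ₀) θ := setOf_sqrt_mem_mem_nhds_polarCoord_symm (hSr r hr) hr.1.le θ
  have hF r (hr : r ∈ Ioc 0 ρ₀) θ := differentiableAt_meanCurvatureField_radialLift hr.1
    ((hlam.contDiffAt (hSr r hr)).differentiableAt (by simp))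
    ((hmu.contDiffAt (hSr r hr)).differentiableAt (by simp)) (hlampos r (hIoc r hr)).ne'
    ((hu.contDiffAt (hU r hr θ)).of_le ENat.LEInfty.out)
  have hlamc := hlam.continuousOn.mono hIcc
  have hmuc := hmu.continuousOn.mono hIcc
  have hflux := integral_mul_le_of_abs_flux_le hρ₀ (g := fun r => 2 * H * mu r * lam r ^ 2)
    (fun r hr θ => ⟨hF r hr θ (1, 0), hF r hr θ (0, 1)⟩)
    (fun r hr θ => by
      have hp := hpde _ (mem_of_mem_nhds (hU r hr θ))
      rwa [radialLift_polarCoord_symm _ hr.1.le, radialLift_polarCoord_symm _ hr.1.le] at hp)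
    (fun r hr θ => abs_meanCurvatureField_radialLift_le hr.1.le (hlampos r (hIoc r hr))
      (hmupos r (hIoc r hr)).le θ)
    (by fun_prop) (by fun_prop)
  have hJ : ∫ r in 0..ρ₀, r * (2 * H * mu r * lam r ^ 2)
      = 2 * H * (ρ₀ ^ 2 * cProfile lam mu ρ₀) := by
    rw [sq_mul_cProfile lam mu hρ₀.ne', ← intervalIntegral.integral_const_mul]
    exact intervalIntegral.integral_congr fun r _ => by ring
  rw [hJ] at hflux
  nlinarith [mul_lt_mul_of_pos_left hlt hρ₀]

/-- Non-existence of entire graphs of constant mean curvature `H ≥ 0` in the rotationally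
invariant warped product `𝔼(M,0,μ)` when the causality condition fails at some radius
`ρ₀ ∈ (0,R)` (equivalently when `H > ½·Ch(M,μ)`). -/
theorem no_entire_rotational_H_graph
    (S : Set ℝ) (hS : S = Set.Ici 0 ∨ ∃ R : ℝ, 0 < R ∧ S = Set.Ico 0 R)
    (lam mu : ℝ → ℝ)
    (hlam : ContDiffOn ℝ (⊤ : ℕ∞) lam S) (hmu : ContDiffOn ℝ (⊤ : ℕ∞) mu S)
    (hlampos : ∀ r ∈ S, 0 < lam r) (hmupos : ∀ r ∈ S, 0 < mu r)
    (H : ℝ) (hH : 0 ≤ H)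
    (hfail : ∃ ρ₀ ∈ S, 0 < ρ₀ ∧ lam ρ₀ * mu ρ₀ < 2 * H * ρ₀ * cProfile lam mu ρ₀) :
    ¬ ∃ u : ℝ × ℝ → ℝ,
      ContDiffOn ℝ (⊤ : ℕ∞) u {p : ℝ × ℝ | Real.sqrt (p.1 ^ 2 + p.2 ^ 2) ∈ S} ∧
      (∀ p ∈ {p : ℝ × ℝ | Real.sqrt (p.1 ^ 2 + p.2 ^ 2) ∈ S},
        pdx (fun q => radialLift mu q ^ 2 * pdx u q /
          Real.sqrt (1 + radialLift mu q ^ 2 * ((pdx u q) ^ 2 + (pdy u q) ^ 2) /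
            radialLift lam q ^ 2)) p
        + pdy (fun q => radialLift mu q ^ 2 * pdy u q /
          Real.sqrt (1 + radialLift mu q ^ 2 * ((pdx u q) ^ 2 + (pdy u q) ^ 2) /
            radialLift lam q ^ 2)) p
        = 2 * H * radialLift mu p * radialLift lam p ^ 2) :=
  no_entire_rotational_H_graph_general S hS lam mu hlam hmu hlampos hmupos H hfail
end
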